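/- arXiv:2412.08354 — 7 statements merged into one kernel-verified Lean document; each statement's English description precedes it below -/
import Mathlib

section
/- Let D̄ ⊆ 𝔽_p^n and let D ⊆ ℤ_p^n be its preimage under coordinatewise reduction mod p. Let f ∈ ℤ_p[x_1,…,x_n] have no critical points in D, i.e. for every P ∈ D there exists i with ∂f/∂x_i(P) ≠ 0, and put c(f,D) = sup_{P ∈ D} min_{1 ≤ i ≤ n} v(∂f/∂x_i(P)). Let g ∈ ℤ_p[x_1,…,x_n] and let β be a positive integer with β > 2·c(f,D) + 1 (in particular c(f,D) < ∞), and set F(x) = f(x) + p^β g(x). Then for every real s > 0: ∫_D |f(x)|^s dμ(x) = ∫_D |F(x)|^s dμ(x). -/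
/-!
If a partial derivative `∂ᵢh` has valuation `e ≤ c` at a point, it keeps the form `p^e · (unit)`
on the ball of radius `p^-(c+1)` around it, and for `J ≥ 2c + 1` Taylor expansion shows that
translating by `p^(J-e)` in the `i`-th coordinate changes `h` by `p^J · (unit)` modulo `p^(J+1)`.
By translation invariance of Haar measure the `p` classes of `{p^J ∣ h}` modulo `p^(J+1)` then have
equal measure: `μ (D ∩ {p^J ∣ h}) = p · μ (D ∩ {p^(J+1) ∣ h})`. The polynomial `F = f + p^β g`
has the same property with the same `c`, and `{p^J ∣ F} = {p^J ∣ f}` for `J ≤ β`; so the two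
families of measures agree for every `J`, and they determine `∫_D |h|^s`.
-/

open MeasureTheory MvPolynomial

namespace IgusaTS

noncomputable instance (p : ℕ) [Fact p.Prime] : MeasurableSpace ℤ_[p] := borel _
instance (p : ℕ) [Fact p.Prime] : BorelSpace ℤ_[p] := ⟨rfl⟩

variable (p : ℕ) [Fact p.Prime]

/-- The normalized Haar measure on `ℤ_p^N` (total mass `1`). -/
noncomputable def haarN (N : ℕ) : Measure (Fin N → ℤ_[p]) := Measure.addHaarMeasure ⊤

/-- The Igusa local zeta function `Z(h;s) = ∫_{ℤ_p^N} |h(x)|^s dμ(x)`. -/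
noncomputable def Zeta {N : ℕ} (h : MvPolynomial (Fin N) ℤ_[p]) (s : ℝ) : ℝ :=
  ∫ x, ‖MvPolynomial.eval x h‖ ^ s ∂(haarN p N)

/-- `E_A = {x ∈ ℤ_p^n : all xᵢ ≠ 0 and (v(x₁),…,v(xₙ)) ∈ A}`. -/
def Eset {n : ℕ} (A : Set (Fin n → ℝ)) : Set (Fin n → ℤ_[p]) :=
  {x | (∀ i, x i ≠ 0) ∧ (fun i => ((x i).valuation : ℝ)) ∈ A}

/-- The Thom–Sebastiani sum `(f ⊕ g)(x,y) = f(x) + g(y)`. -/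
noncomputable def oplus {n m : ℕ} (f : MvPolynomial (Fin n) ℤ_[p])
    (g : MvPolynomial (Fin m) ℤ_[p]) : MvPolynomial (Fin (n + m)) ℤ_[p] :=
  rename (Fin.castAdd m) f + rename (Fin.natAdd n) g

/-- `Z_{A×B}(h;s) = ∫_{E_A × E_B} |h(x,y)|^s dμ(x,y)`. -/
noncomputable def ZetaAB {n m : ℕ} (A : Set (Fin n → ℝ)) (B : Set (Fin m → ℝ))
    (h : MvPolynomial (Fin (n + m)) ℤ_[p]) (s : ℝ) : ℝ :=
  ∫ z in {z : Fin (n + m) → ℤ_[p] |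
      (fun i => z (Fin.castAdd m i)) ∈ Eset p A ∧ (fun j => z (Fin.natAdd n j)) ∈ Eset p B},
    ‖MvPolynomial.eval z h‖ ^ s ∂(haarN p (n + m))

open scoped Classical in
/-- The valuation `v : ℤ_p → ℕ∞` with `v(0) = ∞`. -/
noncomputable def valInf (x : ℤ_[p]) : ℕ∞ :=
  if x = 0 then ⊤ else (x.valuation : ℕ∞)

instance (n : ℕ) : (haarN p n).IsAddHaarMeasure := by
  unfold haarN
  infer_instance

variable {p}

section Taylor

variable {R σ : Type*} [CommRing R] [Fintype σ]

theorem exists_eval_add_eq_add_sum_pderiv_add (f : MvPolynomial σ R) (x u : σ → R) {t : R}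
    (hu : ∀ i, t ∣ u i) :
    ∃ r, eval (x + u) f = eval x f + ∑ i, u i * eval x (pderiv i f) + r ∧ t * t ∣ r := by
  classical
  induction f using MvPolynomial.induction_on with
  | C a => exact ⟨0, by simp, dvd_zero _⟩
  | add f g hf hg =>
    obtain ⟨rf, hf, hrf⟩ := hf
    obtain ⟨rg, hg, hrg⟩ := hg
    refine ⟨rf + rg, ?_, dvd_add hrf hrg⟩
    simp only [map_add, hf, hg, mul_add, Finset.sum_add_distrib]
    ring
  | mul_X f i hf =>
    obtain ⟨r, hf, hr⟩ := hf
    have hterm : ∀ j, u j * eval x (pderiv j (f * X i))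
        = u j * eval x (pderiv j f) * x i + (Pi.single i (u i * eval x f) : σ → R) j := by
      intro j
      rcases eq_or_ne j i with rfl | hj
      · simp [pderiv_X]
        ring
      · simp [pderiv_X, hj]
        ring
    have hsum : ∑ j, u j * eval x (pderiv j (f * X i))
        = (∑ j, u j * eval x (pderiv j f)) * x i + u i * eval x f := by
      simp only [hterm, Finset.sum_add_distrib, Finset.sum_mul, Finset.sum_pi_single']
      simp
    refine ⟨(∑ j, u j * eval x (pderiv j f)) * u i + r * (x i + u i), ?_, ?_⟩
    · rw [hsum, map_mul, map_mul, hf, eval_X, eval_X, Pi.add_apply]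
      ring
    · exact dvd_add (mul_dvd_mul (Finset.dvd_sum fun j _ => dvd_mul_of_dvd_left (hu j) _) (hu i))
        (dvd_mul_of_dvd_left hr _)

theorem dvd_eval_sub_eval (f : MvPolynomial σ R) {x y : σ → R} {t : R}
    (h : ∀ i, t ∣ y i - x i) : t ∣ eval y f - eval x f := by
  obtain ⟨r, hr, htr⟩ := exists_eval_add_eq_add_sum_pderiv_add f x (y - x) h
  rw [add_sub_cancel] at hr
  rw [hr, add_assoc, add_sub_cancel_left]
  exact dvd_add (Finset.dvd_sum fun i _ => dvd_mul_of_dvd_left (h i) _)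
    ((dvd_mul_right t t).trans htr)

theorem pow_succ_dvd_eval_add_single_sub [DecidableEq σ] (h : MvPolynomial σ R) {π d : R}
    {x₀ x : σ → R} {i₀ : σ} {k e J : ℕ} (hx : ∀ i, π ^ k ∣ x i - x₀ i)
    (hd : eval x₀ (pderiv i₀ h) = π ^ e * d) (hek : e + 1 ≤ k) (hJ : k + e ≤ J) :
    π ^ (J + 1) ∣ eval (x + Pi.single i₀ (π ^ (J - e))) h - eval x h - π ^ J * d := by
  obtain ⟨r, hr, htr⟩ := exists_eval_add_eq_add_sum_pderiv_add h x (Pi.single i₀ (π ^ (J - e)))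
    (t := π ^ (J - e)) fun i => by
      rw [Pi.single_apply]
      split_ifs <;> simp
  obtain ⟨w, hw⟩ := dvd_eval_sub_eval (pderiv i₀ h) hx
  have hpow : π ^ (J - e) * π ^ e = π ^ J := by rw [← pow_add, Nat.sub_add_cancel (by omega)]
  have hexpand : eval (x + Pi.single i₀ (π ^ (J - e))) h - eval x h - π ^ J * d
      = π ^ (J - e + k) * w + r := by
    simp only [Pi.single_apply, ite_mul, zero_mul, Finset.sum_ite_eq', Finset.mem_univ,
      if_true] at hr
    rw [pow_add]
    linear_combination hr + π ^ (J - e) * hw + π ^ (J - e) * hd + d * hpow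
  rw [hexpand]
  refine dvd_add (dvd_mul_of_dvd_left (pow_dvd_pow _ (by omega)) _) ?_
  refine (pow_dvd_pow π (by omega : J + 1 ≤ J - e + (J - e))).trans ?_
  rwa [pow_add]

end Taylor

section Residues

theorem toZMod_eq_zero_iff_dvd {z : ℤ_[p]} : PadicInt.toZMod z = 0 ↔ (p : ℤ_[p]) ∣ z := by
  rw [← RingHom.mem_ker, PadicInt.ker_toZMod, PadicInt.maximalIdeal_eq_span_p,
    Ideal.mem_span_singleton]

theorem toZMod_natCast_val (m : ZMod p) : PadicInt.toZMod (m.val : ℤ_[p]) = m := by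
  rw [map_natCast, ZMod.natCast_zmod_val]

theorem pow_succ_dvd_pow_mul_iff (j : ℕ) (a : ℤ_[p]) :
    (p : ℤ_[p]) ^ (j + 1) ∣ p ^ j * a ↔ PadicInt.toZMod a = 0 := by
  rw [pow_succ, mul_dvd_mul_iff_left (pow_ne_zero j PadicInt.prime_p.ne_zero),
    toZMod_eq_zero_iff_dvd]

theorem pow_dvd_iff_exists_pow_succ_dvd_sub (j : ℕ) (z : ℤ_[p]) :
    (p : ℤ_[p]) ^ j ∣ z ↔ ∃ m : ZMod p, (p : ℤ_[p]) ^ (j + 1) ∣ z - p ^ j * (m.val : ℤ_[p]) := by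
  constructor
  · rintro ⟨w, rfl⟩
    refine ⟨PadicInt.toZMod w, ?_⟩
    rw [← mul_sub, pow_succ_dvd_pow_mul_iff, map_sub, toZMod_natCast_val, sub_self]
  · rintro ⟨m, hm⟩
    simpa using dvd_add ((pow_dvd_pow _ j.le_succ).trans hm) (dvd_mul_right _ (m.val : ℤ_[p]))

theorem eq_of_pow_succ_dvd_sub {j : ℕ} {z : ℤ_[p]} {m m' : ZMod p}
    (hm : (p : ℤ_[p]) ^ (j + 1) ∣ z - p ^ j * (m.val : ℤ_[p]))
    (hm' : (p : ℤ_[p]) ^ (j + 1) ∣ z - p ^ j * (m'.val : ℤ_[p])) : m = m' := by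
  have h := dvd_sub hm' hm
  rwa [sub_sub_sub_cancel_left, ← mul_sub, pow_succ_dvd_pow_mul_iff, map_sub, toZMod_natCast_val,
    toZMod_natCast_val, sub_eq_zero] at h

theorem pow_succ_dvd_sub_add_iff {j : ℕ} {z z' d : ℤ_[p]}
    (hz : (p : ℤ_[p]) ^ (j + 1) ∣ z' - z - p ^ j * d) (m : ZMod p) :
    (p : ℤ_[p]) ^ (j + 1) ∣ z' - p ^ j * ((m + PadicInt.toZMod d).val : ℤ_[p]) ↔
      (p : ℤ_[p]) ^ (j + 1) ∣ z - p ^ j * (m.val : ℤ_[p]) := by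
  have hcarry : (p : ℤ_[p]) ^ (j + 1)
      ∣ p ^ j * (d + m.val - ((m + PadicInt.toZMod d).val : ℤ_[p])) := by
    rw [pow_succ_dvd_pow_mul_iff, map_sub, map_add, toZMod_natCast_val, toZMod_natCast_val]
    ring
  have hsplit : z' - p ^ j * ((m + PadicInt.toZMod d).val : ℤ_[p]) = (z - p ^ j * m.val)
      + ((z' - z - p ^ j * d) + p ^ j * (d + m.val - ((m + PadicInt.toZMod d).val : ℤ_[p]))) := by
    ring
  rw [hsplit, dvd_add_left (dvd_add hz hcarry)]

theorem exists_eq_pow_mul_of_not_pow_dvd {a : ℤ_[p]} {c : ℕ} (ha : ¬ (p : ℤ_[p]) ^ (c + 1) ∣ a) :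
    ∃ e d, e ≤ c ∧ a = p ^ e * d ∧ ¬ (p : ℤ_[p]) ∣ d := by
  obtain ⟨e, d, hdp, rfl⟩ :=
    WfDvdMonoid.max_power_factor (show a ≠ 0 by rintro rfl; exact ha (dvd_zero _))
      PadicInt.irreducible_p
  refine ⟨e, d, ?_, rfl, hdp⟩
  by_contra! hce
  exact ha (dvd_mul_of_dvd_left (pow_dvd_pow _ hce) _)

theorem valInf_le_iff {x : ℤ_[p]} {c : ℕ} : valInf p x ≤ c ↔ ¬ (p : ℤ_[p]) ^ (c + 1) ∣ x := by
  unfold valInf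
  split_ifs with hx
  · simp [hx]
  · rw [← Ideal.mem_span_singleton, PadicInt.mem_span_pow_iff_le_valuation x hx]
    norm_cast
    omega

end Residues

section Sets

variable {σ : Type*}

def powBall (x₀ : σ → ℤ_[p]) (k : ℕ) : Set (σ → ℤ_[p]) :=
  {x | ∀ i, (p : ℤ_[p]) ^ k ∣ x i - x₀ i}

def zeroLocusMod (k : ℕ) (h : MvPolynomial σ ℤ_[p]) : Set (σ → ℤ_[p]) :=
  {x | (p : ℤ_[p]) ^ k ∣ eval x h}

theorem zeroLocusMod_succ_subset (k : ℕ) (h : MvPolynomial σ ℤ_[p]) :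
    zeroLocusMod (k + 1) h ⊆ zeroLocusMod k h :=
  fun _ hx => (pow_dvd_pow _ k.le_succ).trans hx

theorem powBall_mono {x₀ : σ → ℤ_[p]} {k l : ℕ} (hkl : k ≤ l) : powBall x₀ l ⊆ powBall x₀ k :=
  fun _ hx i => (pow_dvd_pow _ hkl).trans (hx i)

theorem preimage_comp_singleton_eq_powBall {R : Type*} [Ring R] (φ : ℤ_[p] →+* R) {k : ℕ}
    (hφ : RingHom.ker φ = Ideal.span {(p : ℤ_[p]) ^ k}) (x₀ : σ → ℤ_[p]) :
    (φ ∘ ·) ⁻¹' {φ ∘ x₀} = powBall x₀ k := by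
  ext x
  simp only [Set.mem_preimage, Set.mem_singleton_iff, funext_iff, Function.comp_apply, powBall,
    Set.mem_ofPred_eq, ← Ideal.mem_span_singleton, ← hφ, RingHom.mem_ker, map_sub, sub_eq_zero]

theorem powBall_subset_preimage_comp {R : Type*} [Ring R] (φ : ℤ_[p] →+* R) {k l : ℕ}
    (hφ : RingHom.ker φ = Ideal.span {(p : ℤ_[p]) ^ k}) (hkl : k ≤ l) {S : Set (σ → R)}
    {x₀ : σ → ℤ_[p]} (hx₀ : x₀ ∈ (φ ∘ ·) ⁻¹' S) : powBall x₀ l ⊆ (φ ∘ ·) ⁻¹' S := by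
  intro x hx
  have hx' : x ∈ (φ ∘ ·) ⁻¹' {φ ∘ x₀} := by
    rw [preimage_comp_singleton_eq_powBall φ hφ x₀]
    exact powBall_mono hkl hx
  rwa [Set.mem_preimage, show φ ∘ x = φ ∘ x₀ from hx']

theorem isClosed_setOf_pow_dvd {X : Type*} [TopologicalSpace X] {φ : X → ℤ_[p]}
    (hφ : Continuous φ) (k : ℕ) : IsClosed {x | (p : ℤ_[p]) ^ k ∣ φ x} := by
  simp_rw [← Ideal.mem_span_singleton, ← PadicInt.norm_le_pow_iff_mem_span_pow]
  exact isClosed_le (continuous_norm.comp hφ) continuous_const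

theorem zeroLocusMod_add_pow_smul (f g : MvPolynomial σ ℤ_[p]) {J β : ℕ} (hJ : J ≤ β) :
    zeroLocusMod J (f + (p : ℤ_[p]) ^ β • g) = zeroLocusMod J f := by
  ext x
  simp only [zeroLocusMod, Set.mem_ofPred_eq, map_add, smul_eval]
  exact dvd_add_left (dvd_mul_of_dvd_left (pow_dvd_pow _ hJ) _)

variable [Fintype σ]

theorem measurableSet_powBall (x₀ : σ → ℤ_[p]) (k : ℕ) : MeasurableSet (powBall x₀ k) := by
  simp only [powBall, Set.ofPred_forall]
  exact (isClosed_iInter fun i =>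
    isClosed_setOf_pow_dvd ((continuous_apply i).sub continuous_const) k).measurableSet

theorem measurableSet_zeroLocusMod (k : ℕ) (h : MvPolynomial σ ℤ_[p]) :
    MeasurableSet (zeroLocusMod k h) :=
  (isClosed_setOf_pow_dvd (continuous_eval h) k).measurableSet

theorem measurableSet_preimage_comp {R : Type*} [Ring R] [Finite R] (φ : ℤ_[p] →+* R) {k : ℕ}
    (hφ : RingHom.ker φ = Ideal.span {(p : ℤ_[p]) ^ k}) (S : Set (σ → R)) :
    MeasurableSet ((φ ∘ ·) ⁻¹' S) := by
  rw [← Set.biUnion_preimage_singleton]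
  refine .biUnion S.to_countable fun y _ => ?_
  obtain hy | ⟨x₀, hx₀⟩ := ((φ ∘ ·) ⁻¹' {y}).eq_empty_or_nonempty
  · rw [hy]
    exact .empty
  · rw [Set.mem_preimage, Set.mem_singleton_iff] at hx₀
    rw [← hx₀, preimage_comp_singleton_eq_powBall φ hφ x₀]
    exact measurableSet_powBall x₀ k

end Sets

section Measure

theorem measure_iUnion_eq_mul_of_add_mem_iff {G : Type*} [AddGroup G] [MeasurableSpace G]
    [MeasurableAdd G] (μ : Measure G) [μ.IsAddLeftInvariant] {A : ZMod p → Set G}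
    (hA : ∀ m, MeasurableSet (A m)) (hdisj : Pairwise (Function.onFun Disjoint A)) {u : G}
    {c : ZMod p} (hc : c ≠ 0) (hshift : ∀ m x, u + x ∈ A (m + c) ↔ x ∈ A m) :
    μ (⋃ m, A m) = p * μ (A 0) := by
  have hper : Function.Periodic (fun m => μ (A m)) c := fun m => by
    change μ (A (m + c)) = μ (A m)
    rw [← measure_preimage_add μ u (A (m + c))]
    exact congrArg μ (Set.ext (hshift m))
  have hconst : ∀ m, μ (A m) = μ (A 0) := fun m => by
    simpa [nsmul_eq_mul, ZMod.natCast_zmod_val, hc] using hper.nsmul (m * c⁻¹).val 0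
  rw [measure_iUnion hdisj hA, tsum_fintype, Finset.sum_congr rfl fun m _ => hconst m,
    Finset.sum_const, Finset.card_univ, ZMod.card, nsmul_eq_mul]

theorem measure_eq_sum_measure_preimage_singleton_inter {α β : Type*} [MeasurableSpace α]
    [Fintype β] (μ : Measure α) {π : α → β} (hπ : ∀ y, MeasurableSet (π ⁻¹' {y})) (T : Set α) :
    μ T = ∑ y, μ (π ⁻¹' {y} ∩ T) := by
  have := sum_measure_preimage_singleton (μ := μ.restrict T) Finset.univ fun y _ => hπ y
  simp only [Finset.coe_univ, Set.preimage_univ, Measure.restrict_apply_univ,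
    Measure.restrict_apply (hπ _)] at this
  exact this.symm

variable {σ : Type*} [Fintype σ] (μ : Measure (σ → ℤ_[p]))

section Invariant

variable [μ.IsAddLeftInvariant]

theorem measure_powBall_inter_zeroLocusMod_succ (h : MvPolynomial σ ℤ_[p]) {x₀ : σ → ℤ_[p]}
    {i₀ : σ} {d : ℤ_[p]} {k e J : ℕ} (hd : eval x₀ (pderiv i₀ h) = p ^ e * d)
    (hdp : ¬ (p : ℤ_[p]) ∣ d) (hek : e + 1 ≤ k) (hJ : k + e ≤ J) :
    p * μ (powBall x₀ k ∩ zeroLocusMod (J + 1) h) = μ (powBall x₀ k ∩ zeroLocusMod J h) := by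
  classical
  -- `A m` is where `h ≡ p ^ J * m` modulo `p ^ (J + 1)`; the translation by `u` maps `A m` onto
  -- `A (m + d)`, so these `p` pieces of `powBall x₀ k ∩ zeroLocusMod J h` have equal measure.
  set A : ZMod p → Set (σ → ℤ_[p]) := fun m =>
    powBall x₀ k ∩ zeroLocusMod (J + 1) (h - C (p ^ J * (m.val : ℤ_[p])))
  have hmemA : ∀ m x, x ∈ A m ↔
      x ∈ powBall x₀ k ∧ (p : ℤ_[p]) ^ (J + 1) ∣ eval x h - p ^ J * (m.val : ℤ_[p]) := by
    simp [A, zeroLocusMod]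
  set u : σ → ℤ_[p] := Pi.single i₀ (p ^ (J - e))
  have hu : ∀ x, u + x ∈ powBall x₀ k ↔ x ∈ powBall x₀ k := by
    have hk : ∀ i, (p : ℤ_[p]) ^ k ∣ u i := fun i => by
      simp only [u, Pi.single_apply]
      split_ifs
      exacts [pow_dvd_pow _ (by omega), dvd_zero _]
    refine fun x => forall_congr' fun i => ?_
    rw [Pi.add_apply, add_sub_assoc, dvd_add_right (hk i)]
  have hunion : ⋃ m, A m = powBall x₀ k ∩ zeroLocusMod J h := by
    ext x
    simp only [Set.mem_iUnion, hmemA, exists_and_left, Set.mem_inter_iff]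
    rw [zeroLocusMod, Set.mem_ofPred_eq, pow_dvd_iff_exists_pow_succ_dvd_sub]
  have hA0 : A 0 = powBall x₀ k ∩ zeroLocusMod (J + 1) h := by
    simp [A]
  rw [← hunion, ← hA0]
  refine (measure_iUnion_eq_mul_of_add_mem_iff μ (A := A)
    (fun m => (measurableSet_powBall _ _).inter (measurableSet_zeroLocusMod _ _)) ?_
    (u := u) (c := PadicInt.toZMod d) (by rwa [Ne, toZMod_eq_zero_iff_dvd]) ?_).symm
  · intro m m' hmm'
    refine Set.disjoint_left.2 fun x hx hx' => hmm' ?_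
    exact eq_of_pow_succ_dvd_sub ((hmemA m x).1 hx).2 ((hmemA m' x).1 hx').2
  · intro m x
    rw [hmemA, hmemA, hu]
    refine and_congr_right fun hx => pow_succ_dvd_sub_add_iff ?_ m
    rw [add_comm u]
    exact pow_succ_dvd_eval_add_single_sub h hx hd hek hJ

theorem measure_inter_zeroLocusMod_succ {D : Set (σ → ℤ_[p])} {c : ℕ}
    (hD : ∀ x ∈ D, powBall x (c + 1) ⊆ D) (h : MvPolynomial σ ℤ_[p])
    (hcrit : ∀ x ∈ D, ∃ i, ¬ (p : ℤ_[p]) ^ (c + 1) ∣ eval x (pderiv i h))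
    {J : ℕ} (hJ : 2 * c + 1 ≤ J) :
    p * μ (D ∩ zeroLocusMod (J + 1) h) = μ (D ∩ zeroLocusMod J h) := by
  classical
  let π : (σ → ℤ_[p]) → σ → ZMod (p ^ (c + 1)) := (PadicInt.toZModPow (c + 1) ∘ ·)
  have hπ : ∀ y, MeasurableSet (π ⁻¹' {y}) := fun y =>
    measurableSet_preimage_comp _ (PadicInt.ker_toZModPow _) _
  rw [measure_eq_sum_measure_preimage_singleton_inter μ hπ,
    measure_eq_sum_measure_preimage_singleton_inter μ hπ (D ∩ _), Finset.mul_sum]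
  refine Finset.sum_congr rfl fun y _ => ?_
  obtain hy | ⟨x₀, hx₀y, hx₀D⟩ := (π ⁻¹' {y} ∩ D).eq_empty_or_nonempty
  · simp only [← Set.inter_assoc, hy, Set.empty_inter, measure_empty, mul_zero]
  have hfiber : π ⁻¹' {y} = powBall x₀ (c + 1) := by
    rw [Set.mem_preimage, Set.mem_singleton_iff] at hx₀y
    rw [← hx₀y]
    exact preimage_comp_singleton_eq_powBall _ (PadicInt.ker_toZModPow _) x₀
  have hball : ∀ W, π ⁻¹' {y} ∩ (D ∩ W) = powBall x₀ (c + 1) ∩ W := fun W => by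
    rw [hfiber, ← Set.inter_assoc, Set.inter_eq_left.2 (hD x₀ hx₀D)]
  obtain ⟨i₀, hi₀⟩ := hcrit x₀ hx₀D
  obtain ⟨e, d, hec, hd, hdp⟩ := exists_eq_pow_mul_of_not_pow_dvd hi₀
  rw [hball, hball]
  exact measure_powBall_inter_zeroLocusMod_succ μ h hd hdp (by omega) (by omega)

theorem measure_inter_zeroLocusMod_add_pow_smul {D : Set (σ → ℤ_[p])} {c β : ℕ}
    (hD : ∀ x ∈ D, powBall x (c + 1) ⊆ D) (f g : MvPolynomial σ ℤ_[p])
    (hcrit : ∀ x ∈ D, ∃ i, ¬ (p : ℤ_[p]) ^ (c + 1) ∣ eval x (pderiv i f)) (hβ : 2 * c + 1 ≤ β)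
    (J : ℕ) : μ (D ∩ zeroLocusMod J (f + (p : ℤ_[p]) ^ β • g)) = μ (D ∩ zeroLocusMod J f) := by
  have hcritF : ∀ x ∈ D, ∃ i,
      ¬ (p : ℤ_[p]) ^ (c + 1) ∣ eval x (pderiv i (f + (p : ℤ_[p]) ^ β • g)) := by
    intro x hx
    obtain ⟨i, hi⟩ := hcrit x hx
    refine ⟨i, ?_⟩
    rwa [map_add, Derivation.map_smul, map_add, smul_eval,
      dvd_add_left (dvd_mul_of_dvd_left (pow_dvd_pow _ (by omega)) _)]
  obtain hJ | hJ := le_total J β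
  · rw [zeroLocusMod_add_pow_smul f g hJ]
  induction J, hJ using Nat.le_induction with
  | base => rw [zeroLocusMod_add_pow_smul f g le_rfl]
  | succ J hβJ ih =>
    have hp : (p : ENNReal) ≠ 0 := by exact_mod_cast (Fact.out : p.Prime).ne_zero
    refine (ENNReal.mul_right_inj hp (ENNReal.natCast_ne_top p)).1 ?_
    rw [measure_inter_zeroLocusMod_succ μ hD _ hcritF (by omega),
      measure_inter_zeroLocusMod_succ μ hD f hcrit (by omega), ih]

end Invariant

theorem ofReal_norm_rpow_eq_tsum_indicator {s : ℝ} (hs : 0 < s) (z : ℤ_[p]) :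
    ENNReal.ofReal (‖z‖ ^ s) = ∑' J : ℕ,
      ({w | (p : ℤ_[p]) ^ J ∣ w} \ {w | (p : ℤ_[p]) ^ (J + 1) ∣ w}).indicator
        (fun _ => ENNReal.ofReal (((p : ℝ) ^ (-(J : ℤ))) ^ s)) z := by
  obtain rfl | hz := eq_or_ne z 0
  · simp [Real.zero_rpow hs.ne']
  have hmem : ∀ J : ℕ,
      z ∈ {w | (p : ℤ_[p]) ^ J ∣ w} \ {w | (p : ℤ_[p]) ^ (J + 1) ∣ w} ↔ J = z.valuation := by
    intro J
    simp only [Set.mem_sdiff, Set.mem_ofPred_eq, ← Ideal.mem_span_singleton,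
      PadicInt.mem_span_pow_iff_le_valuation z hz]
    omega
  classical
  simp only [Set.indicator_apply, hmem, tsum_ite_eq]
  rw [PadicInt.norm_eq_zpow_neg_valuation hz]

theorem setIntegral_norm_eval_rpow_eq_tsum [IsFiniteMeasure μ] {D : Set (σ → ℤ_[p])}
    (hD : MeasurableSet D) (h : MvPolynomial σ ℤ_[p]) {s : ℝ} (hs : 0 < s) :
    ∫ x in D, ‖eval x h‖ ^ s ∂μ = (∑' J : ℕ, ENNReal.ofReal (((p : ℝ) ^ (-(J : ℤ))) ^ s) *
      (μ (D ∩ zeroLocusMod J h) - μ (D ∩ zeroLocusMod (J + 1) h))).toReal := by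
  have hlevel : ∀ J, MeasurableSet (zeroLocusMod J h \ zeroLocusMod (J + 1) h) := fun J =>
    (measurableSet_zeroLocusMod J h).diff (measurableSet_zeroLocusMod (J + 1) h)
  rw [integral_eq_lintegral_of_nonneg_ae (.of_forall fun x => by positivity)
    ((continuous_eval h).norm.rpow_const fun _ => Or.inr hs.le).aestronglyMeasurable]
  congr 1
  calc ∫⁻ x in D, ENNReal.ofReal (‖eval x h‖ ^ s) ∂μ
      = ∫⁻ x in D, ∑' J : ℕ, (zeroLocusMod J h \ zeroLocusMod (J + 1) h).indicator
          (fun _ => ENNReal.ofReal (((p : ℝ) ^ (-(J : ℤ))) ^ s)) x ∂μ := by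
        simp_rw [ofReal_norm_rpow_eq_tsum_indicator hs]
        rfl
    _ = _ := by
        rw [lintegral_tsum fun J => (measurable_const.indicator (hlevel J)).aemeasurable]
        refine tsum_congr fun J => ?_
        rw [lintegral_indicator_const (hlevel J), Measure.restrict_apply (hlevel J),
          Set.inter_comm, Set.inter_sdiff_distrib_left, measure_sdiff
            (Set.inter_subset_inter_right D (zeroLocusMod_succ_subset J h))
            (hD.inter (measurableSet_zeroLocusMod _ h)).nullMeasurableSet (measure_ne_top μ _)]

end Measure

theorem exists_not_pow_dvd_pderiv {σ : Type*} [Fintype σ] {D : Set (σ → ℤ_[p])}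
    {f : MvPolynomial σ ℤ_[p]} {β : ℕ}
    (hβ : 2 * (⨆ P ∈ D, Finset.univ.inf (fun i => valInf p (eval P (pderiv i f)))) + 1
      < (β : ℕ∞)) :
    ∃ c : ℕ, 2 * c + 1 < β ∧ ∀ P ∈ D, ∃ i, ¬ (p : ℤ_[p]) ^ (c + 1) ∣ eval P (pderiv i f) := by
  set c' := ⨆ P ∈ D, Finset.univ.inf (fun i => valInf p (eval P (pderiv i f)))
  obtain ⟨c, hc⟩ := ENat.ne_top_iff_exists.1 (show c' ≠ ⊤ by rintro htop; simp [htop] at hβ)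
  rw [← hc] at hβ
  refine ⟨c, by exact_mod_cast hβ, fun P hP => ?_⟩
  have hle : Finset.univ.inf (fun i => valInf p (eval P (pderiv i f))) ≤ c :=
    hc ▸ le_iSup₂_of_le P hP le_rfl
  obtain ⟨i, -, hi⟩ := (Finset.inf_le_iff (ENat.natCast_lt_top c)).1 hle
  exact ⟨i, valInf_le_iff.1 hi⟩

theorem stmt6_general (p n : ℕ) [Fact p.Prime]
    (Dbar : Set (Fin n → ZMod p))
    (D : Set (Fin n → ℤ_[p]))
    (hD : D = {x | (fun i => PadicInt.toZMod (x i)) ∈ Dbar})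
    (f g : MvPolynomial (Fin n) ℤ_[p])
    (β : ℕ)
    (hβ : 2 * (⨆ P ∈ D, Finset.univ.inf
        (fun i => valInf p (MvPolynomial.eval P (MvPolynomial.pderiv i f)))) + 1
      < (β : ℕ∞))
    (F : MvPolynomial (Fin n) ℤ_[p]) (hF : F = f + (p : ℤ_[p]) ^ β • g) :
    ∀ s : ℝ, 0 < s →
      ∫ x in D, ‖MvPolynomial.eval x f‖ ^ s ∂(haarN p n)
        = ∫ x in D, ‖MvPolynomial.eval x F‖ ^ s ∂(haarN p n) := by
  intro s hs
  obtain ⟨c, hβc, hcrit⟩ := exists_not_pow_dvd_pderiv hβ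
  have hker : RingHom.ker (PadicInt.toZMod (p := p)) = Ideal.span {(p : ℤ_[p]) ^ 1} := by
    rw [PadicInt.ker_toZMod, PadicInt.maximalIdeal_eq_span_p, pow_one]
  replace hD : D = (PadicInt.toZMod ∘ ·) ⁻¹' Dbar := hD
  have hDm : MeasurableSet D := hD ▸ measurableSet_preimage_comp _ hker Dbar
  have hDball : ∀ x ∈ D, powBall x (c + 1) ⊆ D := fun x hx =>
    hD ▸ powBall_subset_preimage_comp _ hker (by omega) (hD ▸ hx)
  rw [hF, setIntegral_norm_eval_rpow_eq_tsum _ hDm _ hs,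
    setIntegral_norm_eval_rpow_eq_tsum _ hDm _ hs]
  simp_rw [measure_inter_zeroLocusMod_add_pow_smul _ hDball f g hcrit hβc.le]

/-- **Corollary.** If `f` has no critical points in `D` (the preimage of
`D̄ ⊆ 𝔽_p^n`) and `β > 2c(f,D) + 1`, then adding `p^β g` does not change the integral. -/
theorem stmt6 (p n : ℕ) [Fact p.Prime]
    (Dbar : Set (Fin n → ZMod p))
    (D : Set (Fin n → ℤ_[p]))
    (hD : D = {x | (fun i => PadicInt.toZMod (x i)) ∈ Dbar})
    (f g : MvPolynomial (Fin n) ℤ_[p])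
    (hcrit : ∀ P ∈ D, ∃ i, MvPolynomial.eval P (MvPolynomial.pderiv i f) ≠ 0)
    (β : ℕ) (hβpos : 0 < β)
    (hβ : 2 * (⨆ P ∈ D, Finset.univ.inf
        (fun i => valInf p (MvPolynomial.eval P (MvPolynomial.pderiv i f)))) + 1
      < (β : ℕ∞))
    (F : MvPolynomial (Fin n) ℤ_[p]) (hF : F = f + (p : ℤ_[p]) ^ β • g) :
    ∀ s : ℝ, 0 < s →
      ∫ x in D, ‖MvPolynomial.eval x f‖ ^ s ∂(haarN p n)
        = ∫ x in D, ‖MvPolynomial.eval x F‖ ^ s ∂(haarN p n) :=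
  stmt6_general p n Dbar D hD f g β hβ F hF

end IgusaTS
end

section
/- Let c, d be positive integers, g = gcd(c,d), e = c/g, e' = d/g, and let (c_k,d_k)_{k ≥ 1} be the sequence determined by (c,d) via φ_{c,d}. Then the sequence is periodic with period P := e + e' − 1, i.e. for every k ≥ 1, (c_{k+P}, d_{k+P}) = (c_k, d_k). -/
open MeasureTheory MvPolynomial

namespace IgusaTS

/-- One step of the map `φ_{c,d}`: `φ_{c,d}(s,t) = (c,d)` if `s = t`,
`(s-t, d)` if `s > t`, and `(c, t-s)` if `s < t`. -/
def phiStep (c d : ℕ) : ℕ × ℕ → ℕ × ℕ := fun st =>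
  if st.1 = st.2 then (c, d) else if st.2 < st.1 then (st.1 - st.2, d) else (c, st.2 - st.1)

/-- The sequence `(c_k, d_k)_{k ≥ 1}` determined by `(c,d)` via `φ_{c,d}`,
indexed so that `cdSeq c d k = (c_{k+1}, d_{k+1})`; in particular
`cdSeq c d 0 = (c₁, d₁) = (c, d)`. -/
def cdSeq (c d : ℕ) : ℕ → ℕ × ℕ
  | 0 => (c, d)
  | k + 1 => phiStep c d (cdSeq c d k)

/-- Closed form candidate for the sequence, in terms of `(k*d) % (c+d)`. -/
def fm (c d k : ℕ) : ℕ × ℕ :=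
  if (k * d) % (c + d) = c then (c, d)
  else if (k * d) % (c + d) < c then (c - (k * d) % (c + d), d)
  else (c, (k * d) % (c + d) - c)

lemma fm_zero (c d : ℕ) (hc : 0 < c) : fm c d 0 = (c, d) := by
  simp [fm]
  omega

lemma phiStep_pair (c d s t : ℕ) :
    phiStep c d (s, t) = if s = t then (c, d) else if t < s then (s - t, d) else (c, t - s) := rfl

lemma step_abstract (c d a b : ℕ) (hc : 0 < c) (hd : 0 < d) (ha : a < c + d)
    (hne : a ≠ c) (hb : b = (a + d) % (c + d)) :
    phiStep c d (if a = c then (c, d) else if a < c then (c - a, d) else (c, a - c)) =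
      if b = c then (c, d) else if b < c then (c - b, d) else (c, b - c) := by
  rcases lt_or_gt_of_ne hne with h | h
  · have h1 : b = a + d := by rw [hb]; exact Nat.mod_eq_of_lt (by omega)
    subst h1
    clear hb
    split_ifs <;> simp only [phiStep_pair] <;> split_ifs <;>
      simp only [Prod.mk.injEq, and_true, true_and] <;>
      first | trivial | omega | (exfalso; omega) | (constructor <;> omega)
  · have h1 : b = a - c := by
      rw [hb, Nat.mod_eq_sub_mod (by omega)]
      have h2 : a + d - (c + d) = a - c := by omega
      rw [h2, Nat.mod_eq_of_lt (by omega)]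
    subst h1
    clear hb
    split_ifs <;> simp only [phiStep_pair] <;> split_ifs <;>
      simp only [Prod.mk.injEq, and_true, true_and] <;>
      first | trivial | omega | (exfalso; omega) | (constructor <;> omega)

lemma fm_step (c d : ℕ) (hc : 0 < c) (hd : 0 < d) (k : ℕ)
    (hne : (k * d) % (c + d) ≠ c) :
    phiStep c d (fm c d k) = fm c d (k + 1) := by
  have hm0 : 0 < c + d := by omega
  have ha' : ((k + 1) * d) % (c + d) = ((k * d) % (c + d) + d) % (c + d) := by
    rw [add_mul, one_mul, Nat.add_mod, Nat.mod_eq_of_lt (show d < c + d by omega)]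
  have haltm : (k * d) % (c + d) < c + d := Nat.mod_lt _ hm0
  simp only [fm]
  exact step_abstract c d _ _ hc hd haltm hne ha'

/-- **Lemma (periodicity).** The sequence `(c_k,d_k)` is periodic with period
`P = e + e' - 1`. (Here `cdSeq c d k = (c_{k+1}, d_{k+1})`, so `∀ k : ℕ` below is
exactly the claim for all original indices `k ≥ 1`.) -/
theorem stmt10 (c d : ℕ) (hc : 0 < c) (hd : 0 < d)
    (e e' P : ℕ) (he : e = c / Nat.gcd c d) (he' : e' = d / Nat.gcd c d)
    (hP : P = e + e' - 1) :
    ∀ k : ℕ, cdSeq c d (k + P) = cdSeq c d k := by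
  subst he he' hP
  set g := Nat.gcd c d with hg
  have hg0 : 0 < g := Nat.gcd_pos_of_pos_left _ hc
  have hdc : g ∣ c := Nat.gcd_dvd_left c d
  have hdd : g ∣ d := Nat.gcd_dvd_right c d
  set E := c / g with hE
  set F := d / g with hF
  have hEc : E * g = c := Nat.div_mul_cancel hdc
  have hFd : F * g = d := Nat.div_mul_cancel hdd
  have hE1 : 1 ≤ E := Nat.le_div_iff_mul_le hg0 |>.mpr (by simpa using Nat.le_of_dvd hc hdc)
  have hF1 : 1 ≤ F := Nat.le_div_iff_mul_le hg0 |>.mpr (by simpa using Nat.le_of_dvd hd hdd)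
  have hcop : Nat.Coprime E F := Nat.coprime_div_gcd_div_gcd hg0
  have hm : c + d = (E + F) * g := by rw [← hEc, ← hFd]; ring
  clear_value E F g
  clear hE hF hg hdc hdd
  -- key1 : value of the closed-form parameter at P is exactly c
  have key1 : ((E + F - 1) * d) % (c + d) = c := by
    obtain ⟨e0, he0⟩ := Nat.exists_eq_add_of_le hE1
    obtain ⟨f0, hf0⟩ := Nat.exists_eq_add_of_le hF1
    have hid : (E + F - 1) * d = (c + d) * f0 + c := by
      have h2 : E + F - 1 = e0 + f0 + 1 := by omega
      rw [h2, hm, ← hFd, ← hEc, he0, hf0]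
      ring
    rw [hid, Nat.mul_add_mod, Nat.mod_eq_of_lt (by omega)]
  -- key2 : no earlier index hits c
  have key2 : ∀ k, k < E + F - 1 → (k * d) % (c + d) ≠ c := by
    intro k hk h
    have hq := Nat.div_add_mod (k * d) (c + d)
    have hdvd : (c + d) ∣ (k + 1) * d := by
      refine ⟨k * d / (c + d) + 1, ?_⟩
      rw [add_mul, one_mul, mul_add, mul_one]
      omega
    rw [hm, ← hFd] at hdvd
    have hdvd2 : (E + F) ∣ (k + 1) * F := by
      have h3 : (E + F) * g ∣ ((k + 1) * F) * g := by
        calc (E + F) * g ∣ (k + 1) * (F * g) := hdvd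
        _ = ((k + 1) * F) * g := by ring
      exact (Nat.mul_dvd_mul_iff_right hg0).mp h3
    have hcop2 : Nat.Coprime (E + F) F := by
      simpa [Nat.coprime_add_self_left] using hcop
    have h4 := Nat.Coprime.dvd_of_dvd_mul_right hcop2 hdvd2
    have h5 := Nat.le_of_dvd (by omega) h4
    omega
  -- the closed form is valid up to P
  have hform : ∀ k, k ≤ E + F - 1 → cdSeq c d k = fm c d k := by
    intro k
    induction k with
    | zero => intro _; simpa [cdSeq] using (fm_zero c d hc).symm
    | succ n ih =>
      intro hn
      have h1 : cdSeq c d (n + 1) = phiStep c d (cdSeq c d n) := rfl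
      rw [h1, ih (by omega), fm_step c d hc hd n (key2 n (by omega))]
  have hper : cdSeq c d (E + F - 1) = (c, d) := by
    rw [hform _ le_rfl]
    simp [fm, key1]
  intro k
  induction k with
  | zero => simpa [cdSeq] using hper
  | succ n ih =>
    have h6 : n + 1 + (E + F - 1) = (n + (E + F - 1)) + 1 := by omega
    rw [h6]
    show phiStep c d (cdSeq c d (n + (E + F - 1))) = _
    rw [ih]
    rfl

end IgusaTS
end

section
/- Let c, d be positive integers, g = gcd(c,d), e = c/g, e' = d/g, P = e + e' − 1, and let (c_k,d_k)_{k ≥ 1} be the sequence determined by (c,d) via φ_{c,d}. Then ∑_{k=2}^{P+1} min(c_k, d_k) = lcm(c,d). -/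
open MeasureTheory MvPolynomial

namespace IgusaTS

/-- Partial sums of the mins. -/
def Ssum (c d : ℕ) (k : ℕ) : ℕ := ∑ j ∈ Finset.range k, min (cdSeq c d j).1 (cdSeq c d j).2

lemma Ssum_succ (c d k : ℕ) :
    Ssum c d (k+1) = Ssum c d k + min (cdSeq c d k).1 (cdSeq c d k).2 :=
  Finset.sum_range_succ _ _

lemma inv (c d : ℕ) (hc : 0 < c) (hd : 0 < d) (k : ℕ) :
    0 < (cdSeq c d k).1 ∧ (cdSeq c d k).1 ≤ c ∧ c ∣ (Ssum c d k + (cdSeq c d k).1) ∧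
    0 < (cdSeq c d k).2 ∧ (cdSeq c d k).2 ≤ d ∧ d ∣ (Ssum c d k + (cdSeq c d k).2) := by
  induction k with
  | zero => simpa [cdSeq, Ssum] using ⟨hc, hd⟩
  | succ k ih =>
    obtain ⟨h1, h2, h3, h4, h5, h6⟩ := ih
    have hS := Ssum_succ c d k
    set s := (cdSeq c d k).1 with hs
    set t := (cdSeq c d k).2 with ht
    have hseq : cdSeq c d (k+1) = phiStep c d (s, t) := by
      rw [hs, ht]; rfl
    rcases lt_trichotomy s t with h | h | h
    · have hst : cdSeq c d (k+1) = (c, t - s) := by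
        rw [hseq]; simp [phiStep, h.ne, not_lt.mpr h.le]
      have hmin : min s t = s := min_eq_left h.le
      rw [hst, hS, hmin]
      refine ⟨hc, le_refl c, dvd_add h3 dvd_rfl, ?_, ?_, ?_⟩
      · simpa using Nat.sub_pos_of_lt h
      · exact le_trans (Nat.sub_le _ _) h5
      · have : Ssum c d k + s + (t - s) = Ssum c d k + t := by omega
        rw [this]; exact h6
    · have hst : cdSeq c d (k+1) = (c, d) := by rw [hseq]; simp [phiStep, h]
      have hmin : min s t = s := by rw [h, min_self]
      rw [hst, hS, hmin]
      refine ⟨hc, le_refl c, ?_, hd, le_refl d, ?_⟩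
      · exact dvd_add h3 dvd_rfl
      · rw [h]; exact dvd_add h6 dvd_rfl
    · have hst : cdSeq c d (k+1) = (s - t, d) := by
        rw [hseq]; simp [phiStep, h.ne', h]
      have hmin : min s t = t := min_eq_right h.le
      rw [hst, hS, hmin]
      refine ⟨by simpa using Nat.sub_pos_of_lt h, le_trans (Nat.sub_le _ _) h2, ?_,
        hd, le_refl d, dvd_add h6 dvd_rfl⟩
      have : Ssum c d k + t + (s - t) = Ssum c d k + s := by omega
      rw [this]; exact h3

lemma min_pos (c d : ℕ) (hc : 0 < c) (hd : 0 < d) (k : ℕ) :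
    0 < min (cdSeq c d k).1 (cdSeq c d k).2 := by
  obtain ⟨h1, _, _, h4, _, _⟩ := inv c d hc hd k
  exact lt_min h1 h4

lemma dvd_Ssum_succ (c d : ℕ) (hc : 0 < c) (hd : 0 < d) (k : ℕ) :
    c ∣ Ssum c d (k+1) ∨ d ∣ Ssum c d (k+1) := by
  obtain ⟨h1, h2, h3, h4, h5, h6⟩ := inv c d hc hd k
  rw [Ssum_succ]
  rcases min_cases (cdSeq c d k).1 (cdSeq c d k).2 with ⟨hm, _⟩ | ⟨hm, _⟩
  · exact Or.inl (by rw [hm]; exact h3)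
  · exact Or.inr (by rw [hm]; exact h6)

lemma filter_Ioc_step (c d : ℕ) (hc : 0 < c) (hd : 0 < d) (k : ℕ) :
    (Finset.Ioc (Ssum c d k) (Ssum c d (k+1))).filter (fun m => c ∣ m ∨ d ∣ m)
      = {Ssum c d (k+1)} := by
  obtain ⟨h1, h2, h3, h4, h5, h6⟩ := inv c d hc hd k
  have hS := Ssum_succ c d k
  set s := (cdSeq c d k).1
  set t := (cdSeq c d k).2
  set S := Ssum c d k with hSdef
  ext m
  simp only [Finset.mem_filter, Finset.mem_Ioc, Finset.mem_singleton, hS]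
  constructor
  · rintro ⟨⟨hm1, hm2⟩, hdvd⟩
    have hmins : min s t ≤ s := min_le_left _ _
    have hmint : min s t ≤ t := min_le_right _ _
    rcases hdvd with hcm | hdm
    · have hle : m ≤ S + s := le_trans hm2 (by omega)
      have hd1 : c ∣ (S + s) - m := Nat.dvd_sub h3 hcm
      have : (S + s) - m = 0 := by
        by_contra hne
        have := Nat.le_of_dvd (Nat.pos_of_ne_zero hne) hd1
        omega
      omega
    · have hle : m ≤ S + t := le_trans hm2 (by omega)
      have hd1 : d ∣ (S + t) - m := Nat.dvd_sub h6 hdm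
      have : (S + t) - m = 0 := by
        by_contra hne
        have := Nat.le_of_dvd (Nat.pos_of_ne_zero hne) hd1
        omega
      omega
  · rintro rfl
    have hpos : 0 < min s t := lt_min h1 h4
    refine ⟨⟨by omega, le_refl _⟩, ?_⟩
    rcases min_cases s t with ⟨hm, _⟩ | ⟨hm, _⟩
    · exact Or.inl (by rw [hm]; exact h3)
    · exact Or.inr (by rw [hm]; exact h6)

/-- Counting function. -/
def cnt (c d N : ℕ) : ℕ := ((Finset.Ioc 0 N).filter (fun m => c ∣ m ∨ d ∣ m)).card

lemma cnt_Ssum (c d : ℕ) (hc : 0 < c) (hd : 0 < d) (k : ℕ) :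
    cnt c d (Ssum c d k) = k := by
  induction k with
  | zero => simp [cnt, Ssum]
  | succ k ih =>
    have hle : Ssum c d k ≤ Ssum c d (k+1) := by
      rw [Ssum_succ]; omega
    have hsplit : Finset.Ioc 0 (Ssum c d (k+1))
        = Finset.Ioc 0 (Ssum c d k) ∪ Finset.Ioc (Ssum c d k) (Ssum c d (k+1)) :=
      (Finset.Ioc_union_Ioc_eq_Ioc (Nat.zero_le _) hle).symm
    have hdisj : Disjoint (Finset.Ioc 0 (Ssum c d k)) (Finset.Ioc (Ssum c d k) (Ssum c d (k+1))) := by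
      simp only [Finset.disjoint_left, Finset.mem_Ioc]
      intro a ha hb; omega
    rw [cnt, hsplit, Finset.filter_union,
      Finset.card_union_of_disjoint (Finset.disjoint_filter_filter hdisj),
      filter_Ioc_step c d hc hd k]
    simp [cnt] at ih ⊢
    omega

lemma cnt_formula (c d N : ℕ) :
    cnt c d N + N / Nat.lcm c d = N / c + N / d := by
  have h1 : ((Finset.Ioc 0 N).filter (fun m => c ∣ m)).card = N / c :=
    Nat.Ioc_filter_dvd_card_eq_div N c
  have h2 : ((Finset.Ioc 0 N).filter (fun m => d ∣ m)).card = N / d :=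
    Nat.Ioc_filter_dvd_card_eq_div N d
  have h3 : ((Finset.Ioc 0 N).filter (fun m => Nat.lcm c d ∣ m)).card = N / Nat.lcm c d :=
    Nat.Ioc_filter_dvd_card_eq_div N (Nat.lcm c d)
  have hinter : (Finset.Ioc 0 N).filter (fun m => c ∣ m) ∩ (Finset.Ioc 0 N).filter (fun m => d ∣ m)
      = (Finset.Ioc 0 N).filter (fun m => Nat.lcm c d ∣ m) := by
    rw [← Finset.filter_and]
    apply Finset.filter_congr
    intro x _
    constructor
    · rintro ⟨ha, hb⟩; exact Nat.lcm_dvd ha hb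
    · intro h; exact ⟨dvd_trans (Nat.dvd_lcm_left c d) h, dvd_trans (Nat.dvd_lcm_right c d) h⟩
  have := Finset.card_union_add_card_inter
    ((Finset.Ioc 0 N).filter (fun m => c ∣ m)) ((Finset.Ioc 0 N).filter (fun m => d ∣ m))
  rw [hinter, h3] at this
  unfold cnt
  rw [Finset.filter_or (fun m => c ∣ m) (fun m => d ∣ m)]
  omega

/-- **Lemma.** `∑_{k=2}^{P+1} min(c_k, d_k) = lcm(c,d)`. (Since
`cdSeq c d k = (c_{k+1}, d_{k+1})`, the sum below over `k ∈ range P`, i.e. over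
indices `1,…,P` of `cdSeq` shifted by one, is exactly `∑_{k=2}^{P+1}`.) -/
theorem stmt11 (c d : ℕ) (hc : 0 < c) (hd : 0 < d)
    (e e' P : ℕ) (he : e = c / Nat.gcd c d) (he' : e' = d / Nat.gcd c d)
    (hP : P = e + e' - 1) :
    ∑ k ∈ Finset.range P, min (cdSeq c d (k + 1)).1 (cdSeq c d (k + 1)).2
      = Nat.lcm c d := by
  set g := Nat.gcd c d with hg
  have hgpos : 0 < g := Nat.gcd_pos_of_pos_left d hc
  have hgc : g ∣ c := Nat.gcd_dvd_left c d
  have hgd : g ∣ d := Nat.gcd_dvd_right c d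
  have hlcm_pos : 0 < Nat.lcm c d := Nat.pos_of_ne_zero (Nat.lcm_ne_zero hc.ne' hd.ne')
  have hlcm_c : Nat.lcm c d / c = d / g := by
    rw [Nat.lcm, Nat.mul_div_assoc c hgd, Nat.mul_div_cancel_left _ hc]
  have hlcm_d : Nat.lcm c d / d = c / g := by
    rw [Nat.lcm_comm c d, Nat.lcm, Nat.gcd_comm d c, Nat.mul_div_assoc d hgc, Nat.mul_div_cancel_left _ hd]
  have he_pos : 0 < e := by rw [he]; exact Nat.div_pos (Nat.le_of_dvd hc hgc) hgpos
  have he'_pos : 0 < e' := by rw [he']; exact Nat.div_pos (Nat.le_of_dvd hd hgd) hgpos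
  have hPpos : 0 < P := by omega
  -- cnt at lcm equals P
  have hcnt_lcm : cnt c d (Nat.lcm c d) = P := by
    have := cnt_formula c d (Nat.lcm c d)
    rw [Nat.div_self hlcm_pos, hlcm_c, hlcm_d] at this
    omega
  -- S P = lcm
  have hcntP : cnt c d (Ssum c d P) = P := cnt_Ssum c d hc hd P
  have hSP : Ssum c d P = Nat.lcm c d := by
    rcases lt_trichotomy (Ssum c d P) (Nat.lcm c d) with h | h | h
    · exfalso
      -- lcm is a new element beyond Ssum P
      have hsub : insert (Nat.lcm c d) ((Finset.Ioc 0 (Ssum c d P)).filter (fun m => c ∣ m ∨ d ∣ m))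
          ⊆ (Finset.Ioc 0 (Nat.lcm c d)).filter (fun m => c ∣ m ∨ d ∣ m) := by
        intro x hx
        simp only [Finset.mem_insert, Finset.mem_filter, Finset.mem_Ioc] at hx ⊢
        rcases hx with rfl | ⟨⟨hx1, hx2⟩, hx3⟩
        · exact ⟨⟨hlcm_pos, le_refl _⟩, Or.inl (Nat.dvd_lcm_left c d)⟩
        · exact ⟨⟨hx1, by omega⟩, hx3⟩
      have hnotmem : Nat.lcm c d ∉ (Finset.Ioc 0 (Ssum c d P)).filter (fun m => c ∣ m ∨ d ∣ m) := by
        simp only [Finset.mem_filter, Finset.mem_Ioc]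
        push_neg
        intro h1
        omega
      have := Finset.card_le_card hsub
      rw [Finset.card_insert_of_notMem hnotmem] at this
      simp only [cnt] at hcntP hcnt_lcm
      omega
    · exact h
    · exfalso
      obtain ⟨P', rfl⟩ : ∃ P', P = P' + 1 := ⟨P - 1, by omega⟩
      have hSdvd := dvd_Ssum_succ c d hc hd P'
      have hSpos : 0 < Ssum c d (P' + 1) := by omega
      have hsub : insert (Ssum c d (P' + 1)) ((Finset.Ioc 0 (Nat.lcm c d)).filter (fun m => c ∣ m ∨ d ∣ m))
          ⊆ (Finset.Ioc 0 (Ssum c d (P' + 1))).filter (fun m => c ∣ m ∨ d ∣ m) := by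
        intro x hx
        simp only [Finset.mem_insert, Finset.mem_filter, Finset.mem_Ioc] at hx ⊢
        rcases hx with rfl | ⟨⟨hx1, hx2⟩, hx3⟩
        · exact ⟨⟨hSpos, le_refl _⟩, hSdvd⟩
        · exact ⟨⟨hx1, by omega⟩, hx3⟩
      have hnotmem : Ssum c d (P' + 1) ∉ (Finset.Ioc 0 (Nat.lcm c d)).filter (fun m => c ∣ m ∨ d ∣ m) := by
        simp only [Finset.mem_filter, Finset.mem_Ioc]
        push_neg
        intro h1
        omega
      have := Finset.card_le_card hsub
      rw [Finset.card_insert_of_notMem hnotmem] at this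
      simp only [cnt] at hcntP hcnt_lcm
      omega
  -- cdSeq P = (c, d)
  have hcdP : cdSeq c d P = (c, d) := by
    obtain ⟨h1, h2, h3, h4, h5, h6⟩ := inv c d hc hd P
    rw [hSP] at h3 h6
    have hc' : c ∣ (cdSeq c d P).1 := (Nat.dvd_add_right (Nat.dvd_lcm_left c d)).mp h3
    have hd' : d ∣ (cdSeq c d P).2 := (Nat.dvd_add_right (Nat.dvd_lcm_right c d)).mp h6
    have : (cdSeq c d P).1 = c := Nat.le_antisymm h2 (Nat.le_of_dvd h1 hc')
    have : (cdSeq c d P).2 = d := Nat.le_antisymm h5 (Nat.le_of_dvd h4 hd')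
    ext <;> simp_all
  -- assemble
  have hshift : Ssum c d (P + 1)
      = ∑ k ∈ Finset.range P, min (cdSeq c d (k + 1)).1 (cdSeq c d (k + 1)).2
        + min (cdSeq c d 0).1 (cdSeq c d 0).2 :=
    Finset.sum_range_succ' _ P
  have h0 : min (cdSeq c d 0).1 (cdSeq c d 0).2 = min c d := rfl
  have hlast : Ssum c d (P + 1) = Nat.lcm c d + min c d := by
    rw [Ssum_succ, hSP, hcdP]
  omega

end IgusaTS
end

section
/- Let c, d be positive integers, g = gcd(c,d), e = c/g, e' = d/g, P = e + e' − 1, and let (c_k,d_k)_{k ≥ 1} be the sequence determined by (c,d) via φ_{c,d}. Let c̃, d̃ be arbitrary integers and for k ≥ 2 define ν_k = c̃ + d̃ if c_k = d_k, ν_k = d̃ if c_k > d_k, and ν_k = c̃ if c_k < d_k. Then ∑_{k=2}^{P+1} ν_k = e·d̃ + e'·c̃. -/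
/-!
Read `(c_k, d_k)` as the distances from a point moving to the right on the positive reals to the
next multiple of `c` and the next multiple of `d`: each step jumps to the nearer of the two, and
`ν_k` records whether a multiple of `d`, of `c`, or a common multiple is reached. Up to
`lcm(c, d) = g e e'` the point reaches `e'` multiples of `c` and `e` multiples of `d`, in
`e + e' - 1` steps since only the last one is common, and then the sequence is back at `(c, d)`;
this return also lets the sum be shifted by one step.
-/

open MeasureTheory MvPolynomial

namespace IgusaTS

theorem sum_range_succ_eq_sum_range_of_eq {M : Type*} [AddCancelCommMonoid M] (f : ℕ → M)
    {n : ℕ} (h : f n = f 0) :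
    ∑ k ∈ Finset.range n, f (k + 1) = ∑ k ∈ Finset.range n, f k := by
  have := (Finset.sum_range_succ' f n).symm.trans (Finset.sum_range_succ f n)
  rwa [h, add_left_inj] at this

def nu (ct dt : ℤ) (p : ℕ × ℕ) : ℤ :=
  if p.1 = p.2 then ct + dt else if p.2 < p.1 then dt else ct

lemma nu_eq_ite_add_ite (ct dt : ℤ) (p : ℕ × ℕ) :
    nu ct dt p = (if p.1 ≤ p.2 then ct else 0) + (if p.2 ≤ p.1 then dt else 0) := by
  unfold nu
  split_ifs <;> omega

/-- Among the first `k` steps, those that reset the first coordinate to `c`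
(`refillsSnd`: the second one to `d`); both happen when the coordinates agree. -/
def refillsFst (c d k : ℕ) : ℕ := Nat.count (fun j => (cdSeq c d j).1 ≤ (cdSeq c d j).2) k

def refillsSnd (c d k : ℕ) : ℕ := Nat.count (fun j => (cdSeq c d j).2 ≤ (cdSeq c d j).1) k

@[simp] lemma refillsFst_zero (c d : ℕ) : refillsFst c d 0 = 0 := rfl

@[simp] lemma refillsSnd_zero (c d : ℕ) : refillsSnd c d 0 = 0 := rfl

lemma refillsFst_succ (c d k : ℕ) : refillsFst c d (k + 1) =
    refillsFst c d k + if (cdSeq c d k).1 ≤ (cdSeq c d k).2 then 1 else 0 :=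
  Nat.count_succ _ _

lemma refillsSnd_succ (c d k : ℕ) : refillsSnd c d (k + 1) =
    refillsSnd c d k + if (cdSeq c d k).2 ≤ (cdSeq c d k).1 then 1 else 0 :=
  Nat.count_succ _ _

lemma sum_nu_cdSeq (c d k : ℕ) (ct dt : ℤ) :
    ∑ j ∈ Finset.range k, nu ct dt (cdSeq c d j) =
      refillsFst c d k * ct + refillsSnd c d k * dt := by
  induction k with
  | zero => simp
  | succ k ih =>
    rw [Finset.sum_range_succ, ih, nu_eq_ite_add_ite, refillsFst_succ, refillsSnd_succ]
    split_ifs <;> push_cast <;> ring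

lemma refillsFst_add_refillsSnd {c d k : ℕ} (h : ∀ j < k, (cdSeq c d j).1 ≠ (cdSeq c d j).2) :
    refillsFst c d k + refillsSnd c d k = k := by
  induction k with
  | zero => simp
  | succ k ih =>
    have hk := h k k.lt_succ_self
    rw [refillsFst_succ, refillsSnd_succ]
    have := ih fun j hj => h j (by omega)
    split_ifs <;> omega

lemma cdSeq_mem_Ioc {c d : ℕ} (hc : 0 < c) (hd : 0 < d) (k : ℕ) :
    0 < (cdSeq c d k).1 ∧ (cdSeq c d k).1 ≤ c ∧
      0 < (cdSeq c d k).2 ∧ (cdSeq c d k).2 ≤ d := by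
  induction k with
  | zero => exact ⟨hc, le_rfl, hd, le_rfl⟩
  | succ k ih =>
    simp only [cdSeq, phiStep]
    split_ifs <;> simp only <;> omega

/-- Both coordinates count down to the next multiple of `c` and of `d` respectively, so their
difference is read off the numbers of multiples passed so far. -/
lemma cdSeq_fst_sub_snd (c d k : ℕ) :
    ((cdSeq c d k).1 : ℤ) - (cdSeq c d k).2 =
      (refillsFst c d k + 1) * c - (refillsSnd c d k + 1) * d := by
  induction k with
  | zero => simp [cdSeq]
  | succ k ih =>
    rw [cdSeq, refillsFst_succ, refillsSnd_succ]
    generalize cdSeq c d k = p at ih ⊢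
    obtain ⟨s, t⟩ := p
    rcases lt_trichotomy s t with h | rfl | h
    · simp only [phiStep, h.ne, h.not_gt, h.le, h.not_ge, if_false, if_true]
      push_cast [Nat.cast_sub h.le]
      linear_combination ih
    · simp only [phiStep, le_refl, if_true]
      push_cast
      linear_combination ih
    · simp only [phiStep, h.ne', h, h.le, h.not_ge, if_false, if_true]
      push_cast [Nat.cast_sub h.le]
      linear_combination ih

section Coprime

variable {c d e e' : ℕ}

lemma mul_cdSeq_fst_sub_snd (hratio : e * d = e' * c) (k : ℕ) :
    (e : ℤ) * ((cdSeq c d k).1 - (cdSeq c d k).2) =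
      c * ((refillsFst c d k + 1) * e - (refillsSnd c d k + 1) * e') := by
  have hratio' : (e : ℤ) * d = e' * c := by exact_mod_cast hratio
  rw [cdSeq_fst_sub_snd]
  linear_combination (-(refillsSnd c d k : ℤ) - 1) * hratio'

lemma refills_sub_mem_Ioo (hc : 0 < c) (hd : 0 < d) (he : 0 < e) (hratio : e * d = e' * c)
    (k : ℕ) :
    -(e' : ℤ) < (refillsFst c d k + 1) * e - (refillsSnd c d k + 1) * e' ∧
      ((refillsFst c d k + 1) * e - (refillsSnd c d k + 1) * e' : ℤ) < e := by
  have hmul := mul_cdSeq_fst_sub_snd hratio k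
  obtain ⟨hs, hsc, ht, htd⟩ := cdSeq_mem_Ioc hc hd k
  have hc' : (0 : ℤ) < c := by exact_mod_cast hc
  constructor
  · refine lt_of_mul_lt_mul_left (a := (c : ℤ)) ?_ hc'.le
    nlinarith
  · refine lt_of_mul_lt_mul_left (a := (c : ℤ)) ?_ hc'.le
    nlinarith

lemma le_refills_of_cdSeq_eq (hc : 0 < c) (hcop : e.Coprime e') (hratio : e * d = e' * c)
    {k : ℕ} (heq : (cdSeq c d k).1 = (cdSeq c d k).2) :
    e' ≤ refillsFst c d k + 1 ∧ e ≤ refillsSnd c d k + 1 := by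
  have hmul := mul_cdSeq_fst_sub_snd hratio k
  rw [heq, sub_self, mul_zero, eq_comm, mul_eq_zero, sub_eq_zero] at hmul
  have hbal : (refillsFst c d k + 1) * e = (refillsSnd c d k + 1) * e' := by
    exact_mod_cast hmul.resolve_left (by positivity)
  constructor
  · refine Nat.le_of_dvd (by omega) (hcop.symm.dvd_of_dvd_mul_right ?_)
    exact ⟨_, hbal.trans (mul_comm _ _)⟩
  · refine Nat.le_of_dvd (by omega) (hcop.dvd_of_dvd_mul_right ?_)
    exact ⟨_, hbal.symm.trans (mul_comm _ _)⟩

/-- A coincidence `c_k = d_k` needs `e'` refills of the first coordinate and `e` of the second,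
hence at least `e + e' - 2` steps, while before the first coincidence every step refills exactly
one. -/
lemma cdSeq_fst_ne_snd (hc : 0 < c) (hcop : e.Coprime e') (hratio : e * d = e' * c) :
    ∀ k < e + e' - 2, (cdSeq c d k).1 ≠ (cdSeq c d k).2 := by
  intro k
  induction k using Nat.strong_induction_on with
  | _ k ih =>
    intro hk heq
    have hsum := refillsFst_add_refillsSnd fun j hj => ih j hj (by omega)
    have := le_refills_of_cdSeq_eq hc hcop hratio heq
    omega

lemma refills_at_period_sub_two (hc : 0 < c) (hd : 0 < d) (he : 0 < e) (he' : 0 < e')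
    (hcop : e.Coprime e') (hratio : e * d = e' * c) :
    refillsFst c d (e + e' - 2) = e' - 1 ∧ refillsSnd c d (e + e' - 2) = e - 1 := by
  have hsum := refillsFst_add_refillsSnd (cdSeq_fst_ne_snd hc hcop hratio)
  obtain ⟨hlo, hhi⟩ := refills_sub_mem_Ioo hc hd he hratio (e + e' - 2)
  set A := refillsFst c d (e + e' - 2)
  set B := refillsSnd c d (e + e' - 2)
  have hA : A + 1 ≤ e' := by
    by_contra! h
    have hB : (B : ℤ) + 2 ≤ e := by omega
    nlinarith
  have hB : B + 1 ≤ e := by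
    by_contra! h
    have hA : (A : ℤ) + 2 ≤ e' := by omega
    nlinarith
  omega

lemma cdSeq_period (hc : 0 < c) (hd : 0 < d) (he : 0 < e) (he' : 0 < e')
    (hcop : e.Coprime e') (hratio : e * d = e' * c) :
    cdSeq c d (e + e' - 1) = (c, d) ∧
      refillsFst c d (e + e' - 1) = e' ∧ refillsSnd c d (e + e' - 1) = e := by
  obtain ⟨hA, hB⟩ := refills_at_period_sub_two hc hd he he' hcop hratio
  have heq : (cdSeq c d (e + e' - 2)).1 = (cdSeq c d (e + e' - 2)).2 := by
    have hmul := mul_cdSeq_fst_sub_snd hratio (e + e' - 2)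
    rw [hA, hB, Nat.cast_pred he', Nat.cast_pred he, sub_add_cancel, sub_add_cancel,
      mul_comm (e' : ℤ), sub_self, mul_zero, mul_eq_zero, sub_eq_zero] at hmul
    exact_mod_cast hmul.resolve_left (by positivity)
  rw [show e + e' - 1 = e + e' - 2 + 1 by omega, cdSeq, refillsFst_succ, refillsSnd_succ]
  simp only [heq, le_refl, if_true, phiStep, true_and]
  omega

end Coprime

/-- **Lemma.** With `ν_k = c̃ + d̃`, `d̃`, or `c̃` according as `c_k = d_k`,
`c_k > d_k`, or `c_k < d_k`, one has `∑_{k=2}^{P+1} ν_k = e·d̃ + e'·c̃`. (Since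
`cdSeq c d k = (c_{k+1}, d_{k+1})`, the sum below is exactly `∑_{k=2}^{P+1}`.) -/
theorem stmt12 (c d : ℕ) (hc : 0 < c) (hd : 0 < d)
    (e e' P : ℕ) (he : e = c / Nat.gcd c d) (he' : e' = d / Nat.gcd c d)
    (hP : P = e + e' - 1) (ct dt : ℤ) :
    ∑ k ∈ Finset.range P,
        (if (cdSeq c d (k + 1)).1 = (cdSeq c d (k + 1)).2 then ct + dt
         else if (cdSeq c d (k + 1)).2 < (cdSeq c d (k + 1)).1 then dt else ct)
      = (e : ℤ) * dt + (e' : ℤ) * ct := by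
  have hcop : e.Coprime e' :=
    he ▸ he' ▸ Nat.coprime_div_gcd_div_gcd (Nat.gcd_pos_of_pos_left d hc)
  have hratio : e * d = e' * c := by
    rw [he, he', Nat.div_mul_right_comm (Nat.gcd_dvd_left c d),
      Nat.div_mul_right_comm (Nat.gcd_dvd_right c d), mul_comm]
  have hepos : 0 < e := he ▸ Nat.div_pos (Nat.gcd_le_left d hc) (Nat.gcd_pos_of_pos_left d hc)
  have hepos' : 0 < e' :=
    he' ▸ Nat.div_pos (Nat.gcd_le_right (m := c) hd) (Nat.gcd_pos_of_pos_left d hc)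
  obtain ⟨hperiod, hA, hB⟩ := cdSeq_period hc hd hepos hepos' hcop hratio
  change ∑ k ∈ Finset.range P, nu ct dt (cdSeq c d (k + 1)) = _
  rw [sum_range_succ_eq_sum_range_of_eq (fun k => nu ct dt (cdSeq c d k))
    (by rw [hP, hperiod]; rfl), sum_nu_cdSeq, hP, hA, hB, add_comm]

end IgusaTS
end

section
/- Let e and r be integers with 1 ≤ r ≤ e − 1 and gcd(e,r) = 1. For 1 ≤ i ≤ r let I_i denote the closed interval [e(i−1), e·i] ⊆ ℝ. Then the set Λ₀ = { λ ∈ ℤ : 0 ≤ λ ≤ e−1 and there is no i ∈ {1,…,r} with both λr ∈ I_i and (λ+1)r ∈ I_i } has exactly r − 1 elements. -/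
open MeasureTheory MvPolynomial

namespace IgusaTS

/-- **Counting lemma.** With `gcd(e,r) = 1` and `1 ≤ r ≤ e - 1`, the set `Λ₀` of
`λ ∈ [0, e-1] ∩ ℤ` such that `λr` and `(λ+1)r` do not lie in a common interval
`I_i = [e(i-1), ei]` has exactly `r - 1` elements. -/
theorem stmt13 (e r : ℤ) (hr1 : 1 ≤ r) (hre : r ≤ e - 1) (hgcd : Int.gcd e r = 1)
    (Λ : Set ℤ)
    (hΛ : Λ = {l : ℤ | 0 ≤ l ∧ l ≤ e - 1 ∧
      ¬ ∃ i : ℤ, 1 ≤ i ∧ i ≤ r ∧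
        ((l * r : ℤ) : ℝ) ∈ Set.Icc ((e : ℝ) * ((i : ℝ) - 1)) ((e : ℝ) * (i : ℝ)) ∧
        (((l + 1) * r : ℤ) : ℝ) ∈ Set.Icc ((e : ℝ) * ((i : ℝ) - 1)) ((e : ℝ) * (i : ℝ))}) :
    (Λ.ncard : ℤ) = r - 1 := by
  have hr0 : 0 < r := hr1
  have he0 : 0 < e := by linarith
  set f : ℤ → ℤ := fun k => k * e / r with hf
  -- key: for k in [1, r-1], f k * r < k*e < (f k + 1)*r
  have key : ∀ k : ℤ, 1 ≤ k → k ≤ r - 1 → f k * r < k * e ∧ k * e < (f k + 1) * r := by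
    intro k hk1 hk2
    have hndvd : ¬ (r ∣ k * e) := by
      intro h
      have hcop : Int.gcd r e = 1 := by rwa [Int.gcd_comm]
      have : r ∣ k := Int.dvd_of_dvd_mul_right_of_gcd_one (by rwa [mul_comm] at h) hcop
      have := Int.le_of_dvd (by linarith) this
      omega
    have hle : f k * r ≤ k * e := Int.ediv_mul_le _ (ne_of_gt hr0)
    have hne : f k * r ≠ k * e := by
      intro h
      exact hndvd ⟨f k, by linarith [h]⟩
    exact ⟨lt_of_le_of_ne hle hne, Int.lt_ediv_add_one_mul_self _ hr0⟩
  have hset : Λ = ↑((Finset.Icc 1 (r - 1)).image f) := by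
    rw [hΛ]
    ext l
    simp only [Finset.coe_image, Set.mem_image, Finset.mem_coe, Finset.mem_Icc,
      Set.mem_setOf_eq, Set.mem_Icc]
    constructor
    · rintro ⟨hl0, hl1, hno⟩
      push_neg at hno
      set i₀ : ℤ := l * r / e + 1 with hi₀
      have hlr0 : 0 ≤ l * r := mul_nonneg hl0 hr0.le
      have hi1 : 1 ≤ i₀ := by
        have : 0 ≤ l * r / e := Int.ediv_nonneg hlr0 he0.le
        omega
      have hi2 : i₀ ≤ r := by
        have : l * r / e < r := by
          rw [Int.ediv_lt_iff_lt_mul he0]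
          nlinarith
        omega
      have hlow : e * (i₀ - 1) ≤ l * r := by
        have := Int.ediv_mul_le (l * r) (ne_of_gt he0)
        have h1 : i₀ - 1 = l * r / e := by omega
        rw [h1]; linarith [this]
      have hupgt : l * r < e * i₀ := by
        have := Int.lt_ediv_add_one_mul_self (l * r) he0
        nlinarith [this]
      have hmem1 : ((l * r : ℤ) : ℝ) ∈ Set.Icc ((e : ℝ) * ((i₀ : ℝ) - 1)) ((e : ℝ) * (i₀ : ℝ)) := by
        constructor
        · push_cast; exact_mod_cast hlow
        · push_cast; exact_mod_cast hupgt.le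
      have hfail := hno i₀ hi1 hi2 hmem1
      have hup : e * i₀ < (l + 1) * r := by
        have hlow2 : (e : ℝ) * ((i₀ : ℝ) - 1) ≤ (((l + 1) * r : ℤ) : ℝ) := by
          push_cast
          exact_mod_cast (by linarith : (e * (i₀ - 1) : ℤ) ≤ (l + 1) * r)
        have h := hfail hlow2
        push_cast at h
        exact_mod_cast h
      -- take k = i₀
      refine ⟨i₀, ⟨?_, ?_⟩, ?_⟩
      · exact hi1
      · -- i₀ ≤ r - 1 : since i₀*e = e*i₀ < (l+1)*r ≤ e*r
        have h1 : e * i₀ < e * r := by nlinarith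
        have : i₀ < r := lt_of_mul_lt_mul_left h1 he0.le
        omega
      · -- f i₀ = l
        have h1 : l ≤ i₀ * e / r := by
          rw [Int.le_ediv_iff_mul_le hr0]
          nlinarith
        have h2 : i₀ * e / r < l + 1 := by
          rw [Int.ediv_lt_iff_lt_mul hr0]
          nlinarith
        simp only [hf]
        omega
    · rintro ⟨k, ⟨hk1, hk2⟩, rfl⟩
      obtain ⟨h1, h2⟩ := key k hk1 hk2
      have hke0 : 0 < k * e := by nlinarith
      refine ⟨Int.ediv_nonneg (by nlinarith) hr0.le, ?_, ?_⟩
      · have hfr : f k * r < (e - 1) * r := by nlinarith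
        have : f k < e - 1 := lt_of_mul_lt_mul_right hfr hr0.le
        omega
      · rintro ⟨i, hi1, hi2, hm1, hm2⟩
        have ha : (e : ℤ) * (i - 1) ≤ f k * r := by
          have := hm1.1
          push_cast at this
          exact_mod_cast this
        have hb : (f k + 1) * r ≤ e * i := by
          have := hm2.2
          push_cast at this
          exact_mod_cast this
        have hlt1 : (i - 1) * e < k * e := by nlinarith
        have hlt2 : k * e < i * e := by nlinarith
        have c1 : i - 1 < k := lt_of_mul_lt_mul_right hlt1 he0.le
        have c2 : k < i := lt_of_mul_lt_mul_right hlt2 he0.le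
        omega
  have hinj : Set.InjOn f ↑(Finset.Icc 1 (r - 1)) := by
    intro a ha b hb hab
    simp only [Finset.coe_Icc, Set.mem_Icc] at ha hb
    obtain ⟨ha1, ha2⟩ := key a ha.1 ha.2
    obtain ⟨hb1, hb2⟩ := key b hb.1 hb.2
    rw [hab] at ha1 ha2
    have h1 : (a - b) * e < 1 * e := by nlinarith
    have h2 : (b - a) * e < 1 * e := by nlinarith
    have := lt_of_mul_lt_mul_right h1 he0.le
    have := lt_of_mul_lt_mul_right h2 he0.le
    omega
  rw [hset, Set.ncard_coe_finset, Finset.card_image_of_injOn hinj, Int.card_Icc]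
  have : (r - 1 + 1 - 1).toNat = (r - 1).toNat := by omega
  rw [this]
  omega
end IgusaTS
end

section
/- Let a_1,…,a_e ∈ ℝ^n \ {0} and let Δ = {λ_1 a_1 + … + λ_e a_e : λ_i ∈ ℝ, λ_i > 0} be the strictly positively spanned cone on a_1,…,a_e. Then there exists a finite partition of Δ into sets Δ_1,…,Δ_N such that each Δ_j is of the form {∑_{i ∈ S_j} λ_i a_i : λ_i ∈ ℝ, λ_i > 0} for some subset S_j ⊆ {1,…,e} with the family (a_i)_{i ∈ S_j} linearly independent over ℝ. -/
/-!
Order the coefficient vectors lexicographically and attach to every point `x` of the closed cone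
its lexicographically least nonnegative representation `λ(x)`. Perturbing `λ(x)` along a linear
relation among the `aᵢ` with `i ∈ supp λ(x)` would produce a smaller representation, so
`supp λ(x)` is linearly independent; the same perturbation argument shows that for every `y`
strictly positively spanned by `(aᵢ)_{i ∈ supp λ(x)}` the obvious representation of `y` is
already lexicographically least. Hence the open cones on the finitely many supports `supp λ(x)`,
`x ∈ Δ`, are exactly the fibres of `x ↦ supp λ(x)` on `Δ`. Existence of `λ(x)` follows from a
lexicographically decreasing Carathéodory reduction, since there are only finitely many
representations with independent support.
-/

open Finset Function

namespace IgusaTS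

section Support

variable {𝕜 ι E : Type*} [Fintype ι]

def coeffSupport [Zero 𝕜] [DecidableEq 𝕜] (lam : ι → 𝕜) : Finset ι := {i | lam i ≠ 0}

lemma mem_coeffSupport [Zero 𝕜] [DecidableEq 𝕜] {lam : ι → 𝕜} {i : ι} :
    i ∈ coeffSupport lam ↔ lam i ≠ 0 := by
  simp [coeffSupport]

lemma notMem_coeffSupport [Zero 𝕜] [DecidableEq 𝕜] {lam : ι → 𝕜} {i : ι} :
    i ∉ coeffSupport lam ↔ lam i = 0 := by
  simp [coeffSupport]

variable [Ring 𝕜] [AddCommGroup E] [Module 𝕜 E]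

lemma sum_coeffSupport_smul [DecidableEq 𝕜] (lam : ι → 𝕜) (a : ι → E) :
    ∑ i ∈ coeffSupport lam, lam i • a i = ∑ i, lam i • a i :=
  sum_filter_of_ne fun _ _ h hi => h (by rw [hi, zero_smul])

lemma sum_ite_mem_smul [DecidableEq ι] (T : Finset ι) (f : ι → 𝕜) (a : ι → E) :
    ∑ i, (if i ∈ T then f i else 0) • a i = ∑ i ∈ T, f i • a i := by
  simp_rw [ite_smul, zero_smul, sum_ite_mem, univ_inter]

lemma linearIndepOn_iff_forall_eq_zero (a : ι → E) (T : Finset ι) :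
    LinearIndepOn 𝕜 a (T : Set ι) ↔
      ∀ c : ι → 𝕜, (∀ i ∉ T, c i = 0) → ∑ i, c i • a i = 0 → c = 0 := by
  classical
  rw [linearIndepOn_finset_iff]
  refine ⟨fun h c hc hsum => funext fun i => ?_, fun h f hf i hi => ?_⟩
  · by_cases hi : i ∈ T
    · refine h c ?_ i hi
      rwa [sum_subset (subset_univ T) fun j _ hj => by rw [hc j hj, zero_smul]]
    · exact hc i hi
  · have := h (fun j => if j ∈ T then f j else 0) (fun j hj => if_neg hj)
      (by rwa [sum_ite_mem_smul])
    simpa [hi] using congrFun this i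

end Support

section Order

variable {𝕜 ι : Type*} [Field 𝕜] [LinearOrder 𝕜] [IsStrictOrderedRing 𝕜]

lemma exists_pos_forall_nonneg_add_mul [Finite ι] {u v : ι → 𝕜} (hu : ∀ i, 0 ≤ u i)
    (huv : ∀ i, v i < 0 → 0 < u i) : ∃ t : 𝕜, 0 < t ∧ ∀ i, 0 ≤ u i + t * v i := by
  obtain ⟨⟨t, ht⟩, hle⟩ := Finite.exists_ge (α := {s : 𝕜 // 0 < s}) fun i =>
    if h : v i < 0 then ⟨u i / -v i, div_pos (huv i h) (neg_pos.2 h)⟩ else ⟨1, one_pos⟩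
  refine ⟨t, ht, fun i => ?_⟩
  have hti := hle i
  split_ifs at hti with h
  · have : t * -v i ≤ u i := (le_div_iff₀ (neg_pos.2 h)).1 hti
    linarith
  · nlinarith [hu i, not_lt.1 h]

lemma toLex_add_smul_lt [LinearOrder ι] {lam d : ι → 𝕜} {t : 𝕜} (ht : 0 < t)
    (hd : toLex d < 0) : toLex (lam + t • d) < toLex lam := by
  obtain ⟨j, hj, hdj⟩ := hd
  refine ⟨j, fun i hi => ?_, ?_⟩
  · simp [show d i = 0 from hj i hi]
  · simpa using mul_neg_of_pos_of_neg ht hdj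

end Order

section Representation

variable {𝕜 ι E : Type*} [Field 𝕜] [LinearOrder 𝕜] [Fintype ι] [AddCommGroup E] [Module 𝕜 E]

def IsNonnegRep (a : ι → E) (x : E) (lam : ι → 𝕜) : Prop :=
  (∀ i, 0 ≤ lam i) ∧ ∑ i, lam i • a i = x

def IsLexMinRep [LinearOrder ι] (a : ι → E) (x : E) (lam : ι → 𝕜) : Prop :=
  IsNonnegRep a x lam ∧ ∀ mu, IsNonnegRep a x mu → toLex lam ≤ toLex mu

variable (𝕜) in
def strictPosSpan (a : ι → E) (T : Finset ι) : Set E :=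
  {x | ∃ lam : ι → 𝕜, (∀ i ∈ T, 0 < lam i) ∧ x = ∑ i ∈ T, lam i • a i}

lemma strictPosSpan_univ (a : ι → E) :
    strictPosSpan 𝕜 a univ = {x | ∃ lam : ι → 𝕜, (∀ i, 0 < lam i) ∧ x = ∑ i, lam i • a i} := by
  simp [strictPosSpan]

variable {a : ι → E} {x y : E} {lam mu nu : ι → 𝕜}

lemma IsNonnegRep.pos_of_mem (h : IsNonnegRep a x lam) {i : ι} (hi : i ∈ coeffSupport lam) :
    0 < lam i :=
  (h.1 i).lt_of_ne' (mem_coeffSupport.1 hi)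

lemma IsNonnegRep.eq_of_coeffSupport_eq (hlam : IsNonnegRep a x lam) (hmu : IsNonnegRep a x mu)
    (hind : LinearIndepOn 𝕜 a (coeffSupport lam : Set ι))
    (hs : coeffSupport mu = coeffSupport lam) : lam = mu := by
  refine sub_eq_zero.1 <| (linearIndepOn_iff_forall_eq_zero a _).1 hind _ (fun i hi => ?_) ?_
  · simp [notMem_coeffSupport.1 hi, notMem_coeffSupport.1 (hs ▸ hi)]
  · simp [sub_smul, sum_sub_distrib, hlam.2, hmu.2]

lemma mem_strictPosSpan_iff {T : Finset ι} :
    x ∈ strictPosSpan 𝕜 a T ↔ ∃ nu : ι → 𝕜, IsNonnegRep a x nu ∧ coeffSupport nu = T := by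
  classical
  constructor
  · rintro ⟨lam, hpos, rfl⟩
    refine ⟨fun i => if i ∈ T then lam i else 0, ⟨fun i => ?_, sum_ite_mem_smul T lam a⟩, ?_⟩
    · dsimp only
      split_ifs with hi
      exacts [(hpos i hi).le, le_rfl]
    · ext i
      by_cases hi : i ∈ T <;> simp [mem_coeffSupport, hi, (hpos _ _).ne']
  · rintro ⟨nu, hnu, rfl⟩
    exact ⟨nu, fun i hi => hnu.pos_of_mem hi, by rw [sum_coeffSupport_smul, hnu.2]⟩

lemma IsLexMinRep.unique [LinearOrder ι] (h₁ : IsLexMinRep a x lam) (h₂ : IsLexMinRep a x mu) :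
    lam = mu :=
  toLex_inj.1 <| le_antisymm (h₁.2 mu h₂.1) (h₂.2 lam h₁.1)

lemma IsNonnegRep.add_smul (h : IsNonnegRep a x lam) {d : ι → 𝕜} {t : 𝕜}
    (hd : ∑ i, d i • a i = 0) (hnn : ∀ i, 0 ≤ lam i + t * d i) :
    IsNonnegRep a x (lam + t • d) := by
  refine ⟨hnn, ?_⟩
  simp only [Pi.add_apply, Pi.smul_apply, smul_eq_mul, _root_.add_smul, mul_smul,
    sum_add_distrib, ← smul_sum, hd, smul_zero, add_zero, h.2]

variable [IsStrictOrderedRing 𝕜]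

lemma IsNonnegRep.strictPosSpan_coeffSupport_subset (hlam : IsNonnegRep a x lam)
    (hx : x ∈ strictPosSpan 𝕜 a univ) :
    strictPosSpan 𝕜 a (coeffSupport lam) ⊆ strictPosSpan 𝕜 a univ := by
  intro y hy
  obtain ⟨nu, hnu, hsupp⟩ := mem_strictPosSpan_iff.1 hy
  obtain ⟨lam₀, hlam₀, hsupp₀⟩ := mem_strictPosSpan_iff.1 hx
  -- `y = ∑ (nu - t • lam + t • lam₀) • a`, with `nu - t • lam ≥ 0` for small `t`
  obtain ⟨t, ht, hnn⟩ := exists_pos_forall_nonneg_add_mul (v := -lam) hnu.1 fun i hi =>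
    hnu.pos_of_mem <| hsupp ▸ mem_coeffSupport.2 (by simpa using hi.ne)
  have hrel : ∑ i, (lam₀ - lam) i • a i = 0 := by
    simp [sub_smul, sum_sub_distrib, hlam₀.2, hlam.2]
  have hpos : ∀ i, 0 < nu i + t * (lam₀ - lam) i := fun i => by
    have h₀ := mul_pos ht (hlam₀.pos_of_mem (hsupp₀ ▸ mem_univ i))
    have h₁ := hnn i
    simp only [Pi.sub_apply, Pi.neg_apply] at h₁ ⊢
    linarith
  exact ⟨_, fun i _ => hpos i, (hnu.add_smul hrel fun i => (hpos i).le).2.symm⟩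

variable [LinearOrder ι]

/-- A Carathéodory step. Orienting the relation so that its first nonzero coefficient is negative
makes the step lexicographically decreasing. -/
lemma IsNonnegRep.exists_card_coeffSupport_lt (hlam : IsNonnegRep a x lam)
    (hdep : ¬ LinearIndepOn 𝕜 a (coeffSupport lam : Set ι)) :
    ∃ mu, IsNonnegRep a x mu ∧ #(coeffSupport mu) < #(coeffSupport lam) ∧
      toLex mu ≤ toLex lam := by
  obtain ⟨c, hc, hcT, hsum⟩ : ∃ c : ι → 𝕜, toLex c < 0 ∧
      (∀ i ∉ coeffSupport lam, c i = 0) ∧ ∑ i, c i • a i = 0 := by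
    rw [linearIndepOn_iff_forall_eq_zero] at hdep
    push Not at hdep
    obtain ⟨c, hcT, hsum, hne⟩ := hdep
    rcases lt_or_gt_of_ne (mt toLex_eq_zero.1 hne) with hlt | hgt
    · exact ⟨c, hlt, hcT, hsum⟩
    · refine ⟨-c, by rw [toLex_neg]; exact neg_lt_zero.2 hgt, fun i hi => by simp [hcT i hi], ?_⟩
      simp [neg_smul, hsum]
  have hmemT : ∀ i, c i ≠ 0 → i ∈ coeffSupport lam := fun i => not_imp_comm.1 (hcT i)
  obtain ⟨j, -, hj⟩ := id hc
  obtain ⟨k, hk, hkmin⟩ := exists_min_image {i | c i < 0} (fun i => lam i / -c i)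
    ⟨j, by simp only [mem_filter, mem_univ, true_and]; exact hj⟩
  have hck : c k < 0 := by simpa using hk
  set t := lam k / -c k
  have ht : 0 < t := div_pos (hlam.pos_of_mem (hmemT k hck.ne)) (neg_pos.2 hck)
  have hnn : ∀ i, 0 ≤ lam i + t * c i := by
    intro i
    by_cases hci : c i < 0
    · have : t * -c i ≤ lam i := (le_div_iff₀ (neg_pos.2 hci)).1 (hkmin i (by simpa using hci))
      linarith
    · nlinarith [hlam.1 i, not_lt.1 hci]
  refine ⟨lam + t • c, hlam.add_smul hsum hnn, ?_, (toLex_add_smul_lt ht hc).le⟩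
  have hsub : coeffSupport (lam + t • c) ⊆ (coeffSupport lam).erase k := by
    intro i hi
    rw [mem_coeffSupport] at hi
    refine mem_erase.2 ⟨?_, mem_coeffSupport.2 fun hlam0 => hi ?_⟩
    · rintro rfl
      apply hi
      simp only [Pi.add_apply, Pi.smul_apply, smul_eq_mul, t]
      field_simp [hck.ne]
      ring
    · simp [hlam0, hcT i (notMem_coeffSupport.2 hlam0)]
  exact (card_le_card hsub).trans_lt (card_erase_lt_of_mem (hmemT k hck.ne))

lemma IsNonnegRep.exists_le_linearIndepOn (hlam : IsNonnegRep a x lam) :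
    ∃ mu, IsNonnegRep a x mu ∧ LinearIndepOn 𝕜 a (coeffSupport mu : Set ι) ∧
      toLex mu ≤ toLex lam := by
  induction hn : #(coeffSupport lam) using Nat.strong_induction_on generalizing lam with
  | _ n ih =>
    by_cases hind : LinearIndepOn 𝕜 a (coeffSupport lam : Set ι)
    · exact ⟨lam, hlam, hind, le_rfl⟩
    obtain ⟨mu, hmu, hcard, hle⟩ := hlam.exists_card_coeffSupport_lt hind
    obtain ⟨nu, hnu, hind', hle'⟩ := ih _ (hn ▸ hcard) hmu rfl
    exact ⟨nu, hnu, hind', hle'.trans hle⟩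

/-- There are only finitely many representations with independent support, and every
representation dominates one of them. -/
lemma IsNonnegRep.exists_isLexMinRep (hlam : IsNonnegRep a x lam) :
    ∃ mu : ι → 𝕜, IsLexMinRep a x mu := by
  set R : Set (ι → 𝕜) :=
    {mu | IsNonnegRep a x mu ∧ LinearIndepOn 𝕜 a (coeffSupport mu : Set ι)}
  have hinj : Set.InjOn coeffSupport R := fun mu hmu nu hnu hs =>
    hmu.1.eq_of_coeffSupport_eq hnu.1 hmu.2 hs.symm
  have hR : R.Finite := Set.Finite.of_finite_image (Set.toFinite _) hinj
  obtain ⟨mu₀, hmu₀, hind₀, -⟩ := hlam.exists_le_linearIndepOn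
  obtain ⟨mu, hmuR, hmin⟩ := Set.exists_min_image R toLex hR ⟨mu₀, hmu₀, hind₀⟩
  refine ⟨mu, hmuR.1, fun nu hnu => ?_⟩
  obtain ⟨nu', hnu', hind', hle⟩ := hnu.exists_le_linearIndepOn
  exact (hmin nu' ⟨hnu', hind'⟩).trans hle

/-- Otherwise `lam + t • d` would be a lexicographically smaller representation for small `t`. -/
lemma IsLexMinRep.zero_le_toLex (h : IsLexMinRep a x lam) {d : ι → 𝕜}
    (hd : ∑ i, d i • a i = 0) (hneg : ∀ i, d i < 0 → 0 < lam i) : 0 ≤ toLex d := by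
  by_contra! hlt
  obtain ⟨t, ht, hnn⟩ := exists_pos_forall_nonneg_add_mul h.1.1 hneg
  exact (toLex_add_smul_lt ht hlt).not_ge (h.2 _ (h.1.add_smul hd hnn))

lemma IsLexMinRep.linearIndepOn (h : IsLexMinRep a x lam) :
    LinearIndepOn 𝕜 a (coeffSupport lam : Set ι) := by
  refine (linearIndepOn_iff_forall_eq_zero a _).2 fun c hc hsum => ?_
  have hpos : ∀ i, c i ≠ 0 → 0 < lam i := fun i hi =>
    h.1.pos_of_mem (not_imp_comm.1 (hc i) hi)
  have h₁ := h.zero_le_toLex hsum fun i hi => hpos i hi.ne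
  have h₂ := h.zero_le_toLex (d := -c) (by simp [neg_smul, hsum])
    fun i hi => hpos i (by simpa using hi.ne')
  rw [toLex_neg, neg_nonneg] at h₂
  exact toLex_eq_zero.1 (le_antisymm h₂ h₁)

lemma IsLexMinRep.of_coeffSupport_subset (h : IsLexMinRep a x lam) (hnu : IsNonnegRep a y nu)
    (hsub : coeffSupport nu ⊆ coeffSupport lam) : IsLexMinRep a y nu := by
  refine ⟨hnu, fun mu hmu => ?_⟩
  have hd : ∑ i, (mu - nu) i • a i = 0 := by
    simp [sub_smul, sum_sub_distrib, hmu.2, hnu.2]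
  have := h.zero_le_toLex hd fun i hi => h.1.pos_of_mem <| hsub <| mem_coeffSupport.2 <| by
    have := hmu.1 i
    simp only [Pi.sub_apply] at hi
    linarith
  rwa [toLex_sub, sub_nonneg] at this

lemma IsLexMinRep.coeffSupport_eq_of_mem (h : IsLexMinRep a x lam)
    (hmu : IsLexMinRep a y mu) (hy : y ∈ strictPosSpan 𝕜 a (coeffSupport lam)) :
    coeffSupport mu = coeffSupport lam := by
  obtain ⟨nu, hnu, hs⟩ := mem_strictPosSpan_iff.1 hy
  rw [hmu.unique (h.of_coeffSupport_subset hnu hs.subset), hs]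

theorem exists_partition_strictPosSpan (a : ι → E) :
    ∃ (N : ℕ) (S : Fin N → Finset ι), (∀ j, LinearIndepOn 𝕜 a (S j : Set ι)) ∧
      Pairwise (Disjoint on fun j => strictPosSpan 𝕜 a (S j)) ∧
      ⋃ j, strictPosSpan 𝕜 a (S j) = strictPosSpan 𝕜 a univ := by
  set Δ := strictPosSpan 𝕜 a univ
  have hrep : ∀ x ∈ Δ, ∃ lam : ι → 𝕜, IsLexMinRep a x lam := fun x hx =>
    (mem_strictPosSpan_iff.1 hx).elim fun _ h => h.1.exists_isLexMinRep
  choose! F hF using hrep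
  have hfibre : ∀ x ∈ Δ, ∀ y ∈ strictPosSpan 𝕜 a (coeffSupport (F x)),
      y ∈ Δ ∧ coeffSupport (F y) = coeffSupport (F x) := fun x hx y hy =>
    have hyΔ := (hF x hx).1.strictPosSpan_coeffSupport_subset hx hy
    ⟨hyΔ, (hF x hx).coeffSupport_eq_of_mem (hF y hyΔ) hy⟩
  obtain ⟨N, S, hS⟩ := (Set.toFinite ((fun x => coeffSupport (F x)) '' Δ)).fin_embedding
  have hSF : ∀ j, ∃ x ∈ Δ, coeffSupport (F x) = S j := fun j =>
    (hS ▸ Set.mem_range_self j : S j ∈ (fun x => coeffSupport (F x)) '' Δ)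
  refine ⟨N, S, fun j => ?_, fun j j' hjj' => ?_, ?_⟩
  · obtain ⟨x, hx, hxj⟩ := hSF j
    exact hxj ▸ (hF x hx).linearIndepOn
  · obtain ⟨x, hx, hxj⟩ := hSF j
    obtain ⟨x', hx', hxj'⟩ := hSF j'
    refine Set.disjoint_left.2 fun y hy hy' => hjj' (S.injective ?_)
    rw [← hxj, ← (hfibre x hx y (hxj ▸ hy)).2, (hfibre x' hx' y (hxj' ▸ hy')).2, hxj']
  · ext y
    simp only [Set.mem_iUnion]
    constructor
    · rintro ⟨j, hy⟩
      obtain ⟨x, hx, hxj⟩ := hSF j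
      exact (hfibre x hx y (hxj ▸ hy)).1
    · intro hy
      obtain ⟨j, hj⟩ : coeffSupport (F y) ∈ Set.range S := hS ▸ ⟨y, hy, rfl⟩
      exact ⟨j, hj ▸ mem_strictPosSpan_iff.2 ⟨F y, (hF y hy).1, rfl⟩⟩

end Representation

theorem stmt14_general (n e : ℕ) (a : Fin e → (Fin n → ℝ))
    (Δ : Set (Fin n → ℝ))
    (hΔ : Δ = {x | ∃ lam : Fin e → ℝ, (∀ i, 0 < lam i) ∧ x = ∑ i, lam i • a i}) :
    ∃ (N : ℕ) (S : Fin N → Finset (Fin e)),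
      (∀ j, LinearIndependent ℝ (fun i : (S j : Finset (Fin e)) => a i)) ∧
      (∀ j j', j ≠ j' → Disjoint
        {x : Fin n → ℝ | ∃ lam : Fin e → ℝ, (∀ i ∈ S j, 0 < lam i) ∧
          x = ∑ i ∈ S j, lam i • a i}
        {x : Fin n → ℝ | ∃ lam : Fin e → ℝ, (∀ i ∈ S j', 0 < lam i) ∧
          x = ∑ i ∈ S j', lam i • a i}) ∧
      (⋃ j, {x : Fin n → ℝ | ∃ lam : Fin e → ℝ, (∀ i ∈ S j, 0 < lam i) ∧
          x = ∑ i ∈ S j, lam i • a i}) = Δ := by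
  obtain ⟨N, S, hind, hdisj, hunion⟩ := exists_partition_strictPosSpan (𝕜 := ℝ) a
  rw [hΔ, ← strictPosSpan_univ]
  exact ⟨N, S, hind, fun j j' => @hdisj j j', hunion⟩

/-- **Lemma (Denef–Hoornaert).** A strictly positively spanned cone admits a finite
partition into cones strictly positively spanned by linearly independent subfamilies
of the generators. -/
theorem stmt14 (n e : ℕ) (a : Fin e → (Fin n → ℝ)) (ha : ∀ i, a i ≠ 0)
    (Δ : Set (Fin n → ℝ))
    (hΔ : Δ = {x | ∃ lam : Fin e → ℝ, (∀ i, 0 < lam i) ∧ x = ∑ i, lam i • a i}) :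
    ∃ (N : ℕ) (S : Fin N → Finset (Fin e)),
      (∀ j, LinearIndependent ℝ (fun i : (S j : Finset (Fin e)) => a i)) ∧
      (∀ j j', j ≠ j' → Disjoint
        {x : Fin n → ℝ | ∃ lam : Fin e → ℝ, (∀ i ∈ S j, 0 < lam i) ∧
          x = ∑ i ∈ S j, lam i • a i}
        {x : Fin n → ℝ | ∃ lam : Fin e → ℝ, (∀ i ∈ S j', 0 < lam i) ∧
          x = ∑ i ∈ S j', lam i • a i}) ∧
      (⋃ j, {x : Fin n → ℝ | ∃ lam : Fin e → ℝ, (∀ i ∈ S j, 0 < lam i) ∧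
          x = ∑ i ∈ S j, lam i • a i}) = Δ :=
  stmt14_general n e a Δ hΔ

end IgusaTS
end

section
/- Let f ∈ ℤ_p[x_1,…,x_n] be a nonzero polynomial with f(0) = 0 and let τ be a proper face of the Newton polyhedron Γ_f. Let γ_1,…,γ_e be all the facets of Γ_f containing τ, and let a_1,…,a_e ∈ ℕ^n \ {0} be the unique primitive vectors with F_f(a_i) = γ_i. Then: (1) Δ_τ := {a ∈ ℝ_{≥0}^n \ {0} : F_f(a) = τ} = {λ_1 a_1 + … + λ_e a_e : λ_i ∈ ℝ, λ_i > 0}; (2) the topological closure of Δ_τ equals {a ∈ ℝ_{≥0}^n : τ ⊆ F_f(a)} = {λ_1 a_1 + … + λ_e a_e : λ_i ∈ ℝ, λ_i ≥ 0}; (3) the dimension of the linear span of Δ_τ in ℝ^n equals n − dim τ, where dim τ is the dimension of the affine span of τ. -/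
open MeasureTheory MvPolynomial

namespace IgusaTS

variable (p : ℕ) [Fact p.Prime]

/-- The Newton polyhedron `Γ_f`: convex hull of `⋃_{ω ∈ supp f} (ω + ℝ_{≥0}^n)`. -/
def NewtonPolyhedron {n : ℕ} (f : MvPolynomial (Fin n) ℤ_[p]) : Set (Fin n → ℝ) :=
  convexHull ℝ (⋃ ω ∈ f.support, {x : Fin n → ℝ | ∀ i, (ω i : ℝ) ≤ x i})

/-- `m_f(a) = inf_{x ∈ Γ_f} a·x`. -/
noncomputable def mReal {n : ℕ} (f : MvPolynomial (Fin n) ℤ_[p]) (a : Fin n → ℝ) : ℝ :=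
  sInf ((fun x => ∑ i, a i * x i) '' NewtonPolyhedron p f)

/-- For `a ∈ ℕ^n`, `m_f(a)` as a natural number: the minimum of `a·ω` over
`ω ∈ supp f`, which equals `inf_{x ∈ Γ_f} a·x` since `a ≥ 0`. -/
noncomputable def mNat {n : ℕ} (f : MvPolynomial (Fin n) ℤ_[p]) (a : Fin n → ℕ) : ℕ :=
  sInf {k | ∃ ω ∈ f.support, k = ∑ i, a i * ω i}

/-- The first meet locus `F_f(a) = {x ∈ Γ_f : a·x = m_f(a)}`. -/
def FML {n : ℕ} (f : MvPolynomial (Fin n) ℤ_[p]) (a : Fin n → ℝ) : Set (Fin n → ℝ) :=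
  {x ∈ NewtonPolyhedron p f | ∑ i, a i * x i = mReal p f a}

/-- A proper face of `Γ_f` is a first meet locus `F_f(a)` with `a ∈ ℝ_{≥0}^n \ {0}`. -/
def IsProperFace {n : ℕ} (f : MvPolynomial (Fin n) ℤ_[p]) (τ : Set (Fin n → ℝ)) : Prop :=
  ∃ a : Fin n → ℝ, (∀ i, 0 ≤ a i) ∧ a ≠ 0 ∧ τ = FML p f a

/-- A face of `Γ_f` is `Γ_f` itself or a proper face. -/
def IsFace {n : ℕ} (f : MvPolynomial (Fin n) ℤ_[p]) (τ : Set (Fin n → ℝ)) : Prop :=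
  τ = NewtonPolyhedron p f ∨ IsProperFace p f τ

/-- A facet is a face whose affine span has dimension `n - 1`. -/
def IsFacet {n : ℕ} (f : MvPolynomial (Fin n) ℤ_[p]) (τ : Set (Fin n → ℝ)) : Prop :=
  IsFace p f τ ∧ Module.finrank ℝ (affineSpan ℝ τ).direction = n - 1

/-- `a ∈ ℕ^n` is primitive if the gcd of its components is `1`. -/
def Primitive {n : ℕ} (a : Fin n → ℕ) : Prop := Finset.univ.gcd a = 1

/-- The coercion of `a : ℕ^n` into `ℝ^n`. -/
def natVec {n : ℕ} (a : Fin n → ℕ) : Fin n → ℝ := fun i => (a i : ℝ)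

open scoped Classical in
/-- The face polynomial `f_τ`: the sum of the terms `c_ω x^ω` of `f` with `ω ∈ τ`. -/
noncomputable def facePoly {n : ℕ} (f : MvPolynomial (Fin n) ℤ_[p]) (τ : Set (Fin n → ℝ)) :
    MvPolynomial (Fin n) ℤ_[p] :=
  ∑ ω ∈ f.support, if (fun i => (ω i : ℝ)) ∈ τ then monomial ω (coeff ω f) else 0

/-- `f` is Newton non-critical: for every face `τ` of `Γ_f`, the system
`∂f_τ/∂xᵢ = 0` (`1 ≤ i ≤ n`) has no solution in `(ℚ_p \ {0})^n`. -/
def NewtonNonCritical {n : ℕ} (f : MvPolynomial (Fin n) ℤ_[p]) : Prop :=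
  ∀ τ : Set (Fin n → ℝ), IsFace p f τ →
    ¬ ∃ x : Fin n → ℚ_[p], (∀ i, x i ≠ 0) ∧
        ∀ i, MvPolynomial.aeval x (MvPolynomial.pderiv i (facePoly p f τ)) = 0

/-- The real number `p^{c_{a,b}(s)}`: equal to `p^{-ls - e|b| - e'|a|}` when
`m_f(a) > 0` and `m_g(b) > 0` (where `l = lcm(m_f(a),m_g(b))`,
`e = m_f(a)/gcd(m_f(a),m_g(b))`, `e' = m_g(b)/gcd(m_f(a),m_g(b))`),
and to `0` if `m_f(a) = 0` or `m_g(b) = 0`. -/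
noncomputable def pcab {n m : ℕ} (f : MvPolynomial (Fin n) ℤ_[p])
    (g : MvPolynomial (Fin m) ℤ_[p]) (a : Fin n → ℕ) (b : Fin m → ℕ) (s : ℝ) : ℝ :=
  if mNat p f a = 0 ∨ mNat p g b = 0 then 0
  else (p : ℝ) ^ (-(Nat.lcm (mNat p f a) (mNat p g b) : ℝ) * s
    - ((mNat p f a / Nat.gcd (mNat p f a) (mNat p g b) : ℕ) : ℝ) * (∑ j, (b j : ℝ))
    - ((mNat p g b / Nat.gcd (mNat p f a) (mNat p g b) : ℕ) : ℝ) * (∑ i, (a i : ℝ)))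

end IgusaTS

/-!
For `b ≥ 0` the face `F(b)` of `Γ = conv (S + ℝ≥0ⁿ)` is determined by the points of `S` at which
`b` is minimal together with the coordinates where `b` vanishes. Hence moving `b` a little in any
direction normal to `F(b)` does not change the face. With `τ = F(a₀)` this gives
`closure Δ_τ = {b ≥ 0 | τ ⊆ F(b)}` (add `t • a₀`, `t → 0⁺`) and shows that `Δ_τ` spans the whole
normal space of `τ`, of dimension `n - dim τ`. On the compact slice `∑ bᵢ = 1` of the closed cone,
an extreme point has a one-dimensional normal space, so its face is a facet through `τ` and the
point is a multiple of some `aᵢ`; Krein–Milman then identifies the closed cone with the cone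
spanned by the `aᵢ`, and `Δ_τ` with its strictly positive part.
-/

namespace Newton

open Filter Topology Module

lemma tendsto_add_smul {E : Type*} [TopologicalSpace E] [AddCommMonoid E] [ContinuousAdd E]
    [Module ℝ E] [ContinuousSMul ℝ E] (b c : E) :
    Tendsto (fun t : ℝ => b + t • c) (𝓝 0) (𝓝 b) := by
  have : Continuous fun t : ℝ => b + t • c := by fun_prop
  simpa using this.tendsto 0

lemma exists_pos_of_eventually {p : ℝ → Prop} (h : ∀ᶠ t in 𝓝 0, p t) :
    ∃ t > 0, p t ∧ p (-t) := by
  have hneg : ∀ᶠ t in 𝓝 0, p (-t) := (continuous_neg.tendsto' 0 0 neg_zero).eventually h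
  exact ((h.and hneg).filter_mono nhdsWithin_le_nhds |>.and
    (self_mem_nhdsWithin : Set.Ioi (0:ℝ) ∈ 𝓝[>] 0)).exists.imp fun t ht => ⟨ht.2, ht.1⟩

section conicHull

variable {E κ : Type*} [AddCommGroup E] [Module ℝ E] [Fintype κ]

def conicHull (v : κ → E) : Set E :=
  {x | ∃ lam : κ → ℝ, (∀ i, 0 ≤ lam i) ∧ x = ∑ i, lam i • v i}

def strictConicHull (v : κ → E) : Set E :=
  {x | ∃ lam : κ → ℝ, (∀ i, 0 < lam i) ∧ x = ∑ i, lam i • v i}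

variable {v : κ → E} {x : E} {t : ℝ}

lemma zero_mem_conicHull : (0 : E) ∈ conicHull v :=
  ⟨0, fun _ => le_rfl, by simp⟩

lemma mem_conicHull_self (i : κ) : v i ∈ conicHull v := by
  classical
  refine ⟨Pi.single i 1, fun j => ?_, by simp [Pi.single_apply]⟩
  by_cases h : j = i <;> simp [h]

lemma smul_mem_conicHull (hx : x ∈ conicHull v) (ht : 0 ≤ t) : t • x ∈ conicHull v := by
  obtain ⟨lam, hlam, rfl⟩ := hx
  exact ⟨t • lam, fun i => mul_nonneg ht (hlam i), by simp [Finset.smul_sum, smul_smul]⟩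

lemma convex_conicHull : Convex ℝ (conicHull v) := by
  rintro _ ⟨lam, hlam, rfl⟩ _ ⟨mu, hmu, rfl⟩ s t hs ht -
  refine ⟨s • lam + t • mu, fun i => add_nonneg (mul_nonneg hs (hlam i)) (mul_nonneg ht (hmu i)),
    ?_⟩
  simp [Finset.smul_sum, smul_smul, add_smul, Finset.sum_add_distrib]

end conicHull

variable {ι : Type*}

def polyhedron (S : Finset (ι → ℝ)) : Set (ι → ℝ) :=
  convexHull ℝ (⋃ s ∈ S, Set.Ici s)

variable {S : Finset (ι → ℝ)} {s x : ι → ℝ}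

lemma polyhedron_subset {H : Set (ι → ℝ)} (hH : Convex ℝ H) (h : ∀ s ∈ S, ∀ x, s ≤ x → x ∈ H) :
    polyhedron S ⊆ H :=
  convexHull_min (Set.iUnion₂_subset fun s hs x hx => h s hs x hx) hH

lemma mem_polyhedron (hs : s ∈ S) : s ∈ polyhedron S :=
  subset_convexHull ℝ _ (Set.mem_biUnion hs Set.self_mem_Ici)

lemma add_mem_polyhedron (hx : x ∈ polyhedron S) {v : ι → ℝ} (hv : 0 ≤ v) :
    x + v ∈ polyhedron S := by
  refine polyhedron_subset (H := (· + v) ⁻¹' polyhedron S)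
    ((convex_convexHull ℝ _).translate_preimage_left v) (fun s hs y hy => ?_) hx
  exact subset_convexHull ℝ _ (Set.mem_biUnion hs (hy.trans (le_add_of_nonneg_right hv)))

variable [Fintype ι]

def minFace (P : Set (ι → ℝ)) (b : ι → ℝ) : Set (ι → ℝ) :=
  {x ∈ P | ∀ y ∈ P, b ⬝ᵥ x ≤ b ⬝ᵥ y}

def normalSpace (F : Set (ι → ℝ)) : Submodule ℝ (ι → ℝ) :=
  LinearMap.BilinForm.orthogonal (dotProductBilin ℝ ℝ) (vectorSpan ℝ F)

section minFace

variable {P : Set (ι → ℝ)} {b c x y : ι → ℝ}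

lemma dotProduct_eq_of_mem_minFace (hx : x ∈ minFace P b) (hy : y ∈ minFace P b) :
    b ⬝ᵥ x = b ⬝ᵥ y :=
  le_antisymm (hx.2 y hy.1) (hy.2 x hx.1)

lemma mem_minFace_iff_of_mem (hx : x ∈ minFace P b) :
    y ∈ minFace P b ↔ y ∈ P ∧ b ⬝ᵥ y = b ⬝ᵥ x :=
  ⟨fun hy => ⟨hy.1, dotProduct_eq_of_mem_minFace hy hx⟩,
    fun hy => ⟨hy.1, fun z hz => hy.2 ▸ hx.2 z hz⟩⟩

lemma mem_minFace_add (hb : x ∈ minFace P b) (hc : x ∈ minFace P c) :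
    x ∈ minFace P (b + c) :=
  ⟨hb.1, fun y hy => by simpa only [add_dotProduct] using add_le_add (hb.2 y hy) (hc.2 y hy)⟩

lemma mem_minFace_smul {t : ℝ} (hx : x ∈ minFace P b) (ht : 0 ≤ t) : x ∈ minFace P (t • b) :=
  ⟨hx.1, fun y hy => by
    simpa only [smul_dotProduct, smul_eq_mul] using mul_le_mul_of_nonneg_left (hx.2 y hy) ht⟩

lemma mem_minFace_sum {κ : Type*} [Fintype κ] {v : κ → ι → ℝ} {lam : κ → ℝ} (hxP : x ∈ P)
    (hx : ∀ i, x ∈ minFace P (v i)) (hlam : ∀ i, 0 ≤ lam i) :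
    x ∈ minFace P (∑ i, lam i • v i) :=
  Finset.sum_induction _ (x ∈ minFace P ·) (fun _ _ => mem_minFace_add)
    ⟨hxP, fun y _ => by simp⟩ fun i _ => mem_minFace_smul (hx i) (hlam i)

lemma minFace_smul {t : ℝ} (ht : 0 < t) : minFace P (t • b) = minFace P b := by
  ext x
  simp [minFace, smul_dotProduct, mul_le_mul_iff_right₀ ht]

lemma minFace_add (hb : x ∈ minFace P b) (hc : x ∈ minFace P c) :
    minFace P (b + c) = minFace P b ∩ minFace P c := by
  refine Set.Subset.antisymm (fun z hz => ?_) fun z hz => mem_minFace_add hz.1 hz.2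
  have h := hz.2 x hb.1
  have hbz := hb.2 z hz.1
  have hcz := hc.2 z hz.1
  simp only [add_dotProduct] at h
  exact ⟨(mem_minFace_iff_of_mem hb).2 ⟨hz.1, by linarith⟩,
    (mem_minFace_iff_of_mem hc).2 ⟨hz.1, by linarith⟩⟩

lemma isClosed_setOf_mem_minFace (x : ι → ℝ) : IsClosed {b | x ∈ minFace P b} := by
  by_cases hx : x ∈ P
  · have : {b | x ∈ minFace P b} = ⋂ y ∈ P, {b | b ⬝ᵥ x ≤ b ⬝ᵥ y} := by
      ext; simp [minFace, hx]
    rw [this]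
    exact isClosed_biInter fun y _ =>
      isClosed_le (continuous_id.dotProduct continuous_const)
        (continuous_id.dotProduct continuous_const)
  · simp [minFace, hx]

end minFace

section normalSpace

variable {F G : Set (ι → ℝ)} {c : ι → ℝ}

lemma mem_normalSpace_iff : c ∈ normalSpace F ↔ ∀ x ∈ F, ∀ y ∈ F, c ⬝ᵥ x = c ⬝ᵥ y := by
  rw [normalSpace, LinearMap.BilinForm.mem_orthogonal_iff]
  simp only [dotProductBilin_apply_apply]
  refine ⟨fun h x hx y hy => ?_, fun h d hd => ?_⟩
  · have := h (x -ᵥ y) (vsub_mem_vectorSpan ℝ hx hy)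
    rw [vsub_eq_sub, sub_dotProduct, dotProduct_comm x, dotProduct_comm y] at this
    linarith
  · rw [vectorSpan_def] at hd
    induction hd using Submodule.span_induction with
    | mem d hd =>
      obtain ⟨x, hx, y, hy, rfl⟩ := hd
      change (x -ᵥ y) ⬝ᵥ c = 0
      rw [vsub_eq_sub, sub_dotProduct, dotProduct_comm x, dotProduct_comm y, h x hx y hy, sub_self]
    | zero => exact zero_dotProduct c
    | add d d' _ _ h h' => rw [add_dotProduct, h, h', add_zero]
    | smul t d _ h => rw [smul_dotProduct, h, smul_zero]

lemma normalSpace_anti (h : F ⊆ G) : normalSpace G ≤ normalSpace F :=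
  LinearMap.BilinForm.orthogonal_le (vectorSpan_mono ℝ h)

lemma self_mem_normalSpace_minFace {P : Set (ι → ℝ)} {b : ι → ℝ} :
    b ∈ normalSpace (minFace P b) :=
  mem_normalSpace_iff.2 fun _ hx _ hy => dotProduct_eq_of_mem_minFace hx hy

lemma finrank_normalSpace (F : Set (ι → ℝ)) :
    finrank ℝ (normalSpace F) = Fintype.card ι - finrank ℝ (vectorSpan ℝ F) := by
  rw [normalSpace, LinearMap.BilinForm.finrank_orthogonal, finrank_fintype_fun_eq_card]
  exact ⟨fun x hx => dotProduct_eq_zero x hx,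
    fun y hy => dotProduct_eq_zero y fun x => by rw [dotProduct_comm]; exact hy x⟩

end normalSpace

section polyhedron

variable {S : Finset (ι → ℝ)} {a b c s x : ι → ℝ}

lemma mem_minFace_polyhedron_iff (hb : 0 ≤ b) (hx : x ∈ polyhedron S) :
    x ∈ minFace (polyhedron S) b ↔ ∀ s ∈ S, b ⬝ᵥ x ≤ b ⬝ᵥ s :=
  ⟨fun h s hs => h.2 s (mem_polyhedron hs), fun h => ⟨hx,
    polyhedron_subset (convex_halfSpace_ge (dotProductBilin ℝ ℝ b).isLinear _) fun s hs _ hy =>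
      (h s hs).trans (dotProduct_le_dotProduct_of_nonneg_left hy hb)⟩⟩

lemma exists_mem_minFace (hS : S.Nonempty) (hb : 0 ≤ b) :
    ∃ s ∈ S, s ∈ minFace (polyhedron S) b := by
  obtain ⟨s, hs, hmin⟩ := S.exists_min_image (b ⬝ᵥ ·) hS
  exact ⟨s, hs, (mem_minFace_polyhedron_iff hb (mem_polyhedron hs)).2 hmin⟩

lemma apply_eq_zero_of_mem_normalSpace (hS : S.Nonempty) (hb : 0 ≤ b)
    (hc : c ∈ normalSpace (minFace (polyhedron S) b)) {i : ι} (hi : b i = 0) : c i = 0 := by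
  classical
  obtain ⟨s, -, hs⟩ := exists_mem_minFace hS hb
  have hsi : s + Pi.single i 1 ∈ minFace (polyhedron S) b :=
    (mem_minFace_iff_of_mem hs).2 ⟨add_mem_polyhedron hs.1 (Pi.single_nonneg.2 zero_le_one),
      by rw [dotProduct_add, dotProduct_single, hi, zero_mul, add_zero]⟩
  simpa [dotProduct_add, dotProduct_single] using mem_normalSpace_iff.1 hc _ hsi _ hs

/- For large `C`, the affine function `(b - C • a) ⬝ᵥ x` is maximal on `polyhedron S` at a
common minimizer `s₀` of `a` and `b`; on the face `a ⬝ᵥ x = a ⬝ᵥ s₀` this forces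
`b ⬝ᵥ x ≤ b ⬝ᵥ s₀`. -/
lemma minFace_subset_minFace (hS : S.Nonempty) (ha : 0 ≤ a)
    (hA : ∀ s ∈ S, s ∈ minFace (polyhedron S) a → s ∈ minFace (polyhedron S) b)
    (hZ : ∀ i, a i = 0 → b i = 0) :
    minFace (polyhedron S) a ⊆ minFace (polyhedron S) b := by
  obtain ⟨s₀, hs₀, hs₀a⟩ := exists_mem_minFace hS ha
  have hs₀b := hA s₀ hs₀ hs₀a
  obtain ⟨C, hCS, hCi⟩ : ∃ C : ℝ, (∀ s ∈ S, b ⬝ᵥ s - b ⬝ᵥ s₀ ≤ C * (a ⬝ᵥ s - a ⬝ᵥ s₀)) ∧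
      ∀ i, b i ≤ C * a i := by
    refine (((eventually_all_finset S).2 fun s hs => ?_).and
      (eventually_all.2 fun i => ?_)).exists (f := atTop)
    · by_cases hsa : s ∈ minFace (polyhedron S) a
      · refine .of_forall fun C => ?_
        rw [dotProduct_eq_of_mem_minFace hsa hs₀a,
          dotProduct_eq_of_mem_minFace (hA s hs hsa) hs₀b, sub_self, sub_self, mul_zero]
      · have hlt : a ⬝ᵥ s₀ < a ⬝ᵥ s := (hs₀a.2 s (mem_polyhedron hs)).lt_of_ne fun h =>
          hsa ((mem_minFace_iff_of_mem hs₀a).2 ⟨mem_polyhedron hs, h.symm⟩)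
        exact (tendsto_id.atTop_mul_const (sub_pos.2 hlt)).eventually_ge_atTop _
    · by_cases hai : a i = 0
      · exact .of_forall fun C => by rw [hai, hZ i hai, mul_zero]
      · exact (tendsto_id.atTop_mul_const ((ha i).lt_of_ne' hai)).eventually_ge_atTop _
  set d := b - C • a
  have hd : d ≤ 0 := fun i => by simpa [d] using hCi i
  have hP : polyhedron S ⊆ {x | d ⬝ᵥ x ≤ d ⬝ᵥ s₀} := by
    refine polyhedron_subset (convex_halfSpace_le (dotProductBilin ℝ ℝ d).isLinear _)
      fun s hs x hsx => ?_
    have h1 : d ⬝ᵥ (x - s) ≤ 0 := by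
      simpa using dotProduct_le_dotProduct_of_nonneg_right hd (sub_nonneg.2 hsx)
    have h2 := hCS s hs
    simp only [d, Set.mem_ofPred_eq, sub_dotProduct, dotProduct_sub, smul_dotProduct,
      smul_eq_mul] at h1 h2 ⊢
    linarith
  intro x hx
  have h1 := hP hx.1
  have h2 := dotProduct_eq_of_mem_minFace hx hs₀a
  simp only [d, Set.mem_ofPred_eq, sub_dotProduct, smul_dotProduct, smul_eq_mul, h2] at h1
  exact (mem_minFace_iff_of_mem hs₀b).2 ⟨hx.1, le_antisymm (by linarith) (hs₀b.2 x hx.1)⟩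

lemma eventually_minFace_add_smul (hS : S.Nonempty) (hb : 0 ≤ b)
    (hc : c ∈ normalSpace (minFace (polyhedron S) b)) :
    ∀ᶠ t in 𝓝 (0 : ℝ), 0 ≤ b + t • c ∧
      minFace (polyhedron S) (b + t • c) = minFace (polyhedron S) b := by
  set P := polyhedron S
  obtain ⟨s₀, hs₀, hs₀b⟩ := exists_mem_minFace hS hb
  have hcoord : ∀ᶠ t in 𝓝 (0 : ℝ), ∀ i,
      (b i = 0 → (b + t • c) i = 0) ∧ (b i ≠ 0 → 0 < (b + t • c) i) := by
    refine eventually_all.2 fun i => ?_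
    by_cases hi : b i = 0
    · refine .of_forall fun t => ⟨fun _ => ?_, fun h => (h hi).elim⟩
      simp [hi, apply_eq_zero_of_mem_normalSpace hS hb hc hi]
    · have hlim := ((continuous_apply i).tendsto b).comp (tendsto_add_smul b c)
      filter_upwards [hlim.eventually_const_lt ((hb i).lt_of_ne' hi)] with t ht
      exact ⟨fun h => (hi h).elim, fun _ => ht⟩
  have hstrict : ∀ᶠ t in 𝓝 (0 : ℝ), ∀ s ∈ S, s ∉ minFace P b →
      (b + t • c) ⬝ᵥ s₀ < (b + t • c) ⬝ᵥ s := by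
    refine (eventually_all_finset S).2 fun s hs => ?_
    by_cases hsb : s ∈ minFace P b
    · exact .of_forall fun _ h => (h hsb).elim
    · have hlt : b ⬝ᵥ s₀ < b ⬝ᵥ s := (hs₀b.2 s (mem_polyhedron hs)).lt_of_ne fun h =>
        hsb ((mem_minFace_iff_of_mem hs₀b).2 ⟨mem_polyhedron hs, h.symm⟩)
      have hcont : Continuous fun t : ℝ => (b + t • c) ⬝ᵥ s - (b + t • c) ⬝ᵥ s₀ := by
        fun_prop
      filter_upwards [(hcont.tendsto' 0 _ (by simp)).eventually_const_lt (sub_pos.2 hlt)]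
        with t ht _
      linarith
  filter_upwards [hcoord, hstrict] with t hcoord hstrict
  set b' := b + t • c
  have hb' : 0 ≤ b' := fun i => by
    by_cases hi : b i = 0
    · exact ((hcoord i).1 hi).ge
    · exact ((hcoord i).2 hi).le
  have hZ : ∀ i, b' i = 0 ↔ b i = 0 := fun i =>
    ⟨fun h => by_contra fun hi => ((hcoord i).2 hi).ne' h, (hcoord i).1⟩
  have heq : ∀ s ∈ minFace P b, b' ⬝ᵥ s = b' ⬝ᵥ s₀ := fun s hs => by
    simp only [b', add_dotProduct, smul_dotProduct, dotProduct_eq_of_mem_minFace hs hs₀b,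
      mem_normalSpace_iff.1 hc s hs s₀ hs₀b]
  have hs₀b' : s₀ ∈ minFace P b' :=
    (mem_minFace_polyhedron_iff hb' (mem_polyhedron hs₀)).2 fun s hs => by
      by_cases hsb : s ∈ minFace P b
      · exact (heq s hsb).ge
      · exact (hstrict s hs hsb).le
  have hA : ∀ s ∈ S, s ∈ minFace P b' ↔ s ∈ minFace P b := fun s hs =>
    ⟨fun hsb' => by_contra fun hsb => (hstrict s hs hsb).not_ge (hsb'.2 s₀ hs₀b'.1),
      fun hsb => (mem_minFace_iff_of_mem hs₀b').2 ⟨mem_polyhedron hs, heq s hsb⟩⟩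
  exact ⟨hb', (minFace_subset_minFace hS hb' (fun s hs => (hA s hs).1) fun i => (hZ i).1).antisymm
    (minFace_subset_minFace hS hb (fun s hs => (hA s hs).2) fun i => (hZ i).2)⟩

end polyhedron

section cones

variable {κ : Type*}

def coneOfFace (P τ : Set (ι → ℝ)) : Set (ι → ℝ) :=
  {b | 0 ≤ b ∧ b ≠ 0 ∧ minFace P b = τ}

def normalCone (P τ : Set (ι → ℝ)) : Set (ι → ℝ) :=
  {b | 0 ≤ b ∧ τ ⊆ minFace P b}

section normalCone

variable {P τ : Set (ι → ℝ)} {b : ι → ℝ}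

lemma coneOfFace_subset_normalCone : coneOfFace P τ ⊆ normalCone P τ :=
  fun _ hb => ⟨hb.1, hb.2.2.ge⟩

lemma isClosed_normalCone : IsClosed (normalCone P τ) := by
  have : normalCone P τ = Set.Ici 0 ∩ ⋂ x ∈ τ, {b | x ∈ minFace P b} := by
    ext; simp [normalCone, Set.subset_def]
  rw [this]
  exact isClosed_Ici.inter (isClosed_biInter fun x _ => isClosed_setOf_mem_minFace x)

lemma smul_mem_normalCone (hb : b ∈ normalCone P τ) {t : ℝ} (ht : 0 ≤ t) :
    t • b ∈ normalCone P τ :=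
  ⟨smul_nonneg ht hb.1, fun _ hx => mem_minFace_smul (hb.2 hx) ht⟩

lemma convex_normalCone : Convex ℝ (normalCone P τ) := fun _ hb _ hc _ _ hs ht _ =>
  ⟨add_nonneg (smul_nonneg hs hb.1) (smul_nonneg ht hc.1), fun _ hx =>
    mem_minFace_add (mem_minFace_smul (hb.2 hx) hs) (mem_minFace_smul (hc.2 hx) ht)⟩

lemma conicHull_subset_normalCone [Fintype κ] {v : κ → ι → ℝ} (hτ : τ ⊆ P)
    (hv : ∀ i, v i ∈ normalCone P τ) : conicHull v ⊆ normalCone P τ := by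
  rintro _ ⟨lam, hlam, rfl⟩
  exact ⟨Finset.sum_nonneg fun i _ => smul_nonneg (hlam i) (hv i).1,
    fun x hx => mem_minFace_sum (hτ hx) (fun i => (hv i).2 hx) hlam⟩

end normalCone

variable {S : Finset (ι → ℝ)} {a₀ b x : ι → ℝ}

lemma add_smul_mem_coneOfFace (hS : S.Nonempty) (ha₀ : 0 ≤ a₀) (ha₀' : a₀ ≠ 0)
    (hb : b ∈ normalCone (polyhedron S) (minFace (polyhedron S) a₀)) {t : ℝ} (ht : 0 < t) :
    b + t • a₀ ∈ coneOfFace (polyhedron S) (minFace (polyhedron S) a₀) := by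
  obtain ⟨x, -, hx⟩ := exists_mem_minFace hS ha₀
  have hta : 0 ≤ t • a₀ := smul_nonneg ht.le ha₀
  refine ⟨add_nonneg hb.1 hta, fun h => smul_ne_zero ht.ne' ha₀'
    ((add_eq_zero_iff_of_nonneg hb.1 hta).1 h).2, ?_⟩
  have hx' : x ∈ minFace (polyhedron S) (t • a₀) := by rwa [minFace_smul ht]
  rw [minFace_add (hb.2 hx) hx', minFace_smul ht]
  exact Set.inter_eq_right.2 hb.2

theorem closure_coneOfFace (hS : S.Nonempty) (ha₀ : 0 ≤ a₀) (ha₀' : a₀ ≠ 0) :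
    closure (coneOfFace (polyhedron S) (minFace (polyhedron S) a₀)) =
      normalCone (polyhedron S) (minFace (polyhedron S) a₀) := by
  refine (closure_minimal coneOfFace_subset_normalCone isClosed_normalCone).antisymm
    fun b hb => mem_closure_of_tendsto
      ((tendsto_add_smul b a₀).mono_left (nhdsWithin_le_nhds (s := Set.Ioi 0))) ?_
  exact eventually_nhdsWithin_of_forall fun t ht => add_smul_mem_coneOfFace hS ha₀ ha₀' hb ht

def CoversFacetsThrough (P τ : Set (ι → ℝ)) (v : κ → ι → ℝ) : Prop :=
  ∀ b, 0 ≤ b → b ≠ 0 → finrank ℝ (vectorSpan ℝ (minFace P b)) = Fintype.card ι - 1 →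
    τ ⊆ minFace P b → ∃ i, minFace P b = minFace P (v i)

variable {τ : Set (ι → ℝ)} {v : κ → ι → ℝ}

/- If the normal space of the face of `x` had dimension at least two, it would contain a
nonzero `c` with coordinate sum zero, and `x ± t • c` would stay in the slice. -/
lemma finrank_normalSpace_eq_one_of_mem_extremePoints (hS : S.Nonempty)
    (hx : x ∈ (normalCone (polyhedron S) τ ∩ {x | ∑ i, x i = 1}).extremePoints ℝ) :
    finrank ℝ (normalSpace (minFace (polyhedron S) x)) = 1 := by
  obtain ⟨⟨⟨hx0, hτx⟩, hx1⟩, hext⟩ := hx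
  set N := normalSpace (minFace (polyhedron S) x)
  have hxne : x ≠ 0 := by rintro rfl; simp at hx1
  refine le_antisymm (not_lt.1 fun h2 => ?_) (Submodule.one_le_finrank_iff.2
    ((Submodule.ne_bot_iff N).2 ⟨x, self_mem_normalSpace_minFace, hxne⟩))
  set σ : (ι → ℝ) →ₗ[ℝ] ℝ := dotProductBilin ℝ ℝ 1
  have hker : Fintype.card ι ≤ finrank ℝ (LinearMap.ker σ) + 1 := by
    have h1 := LinearMap.finrank_range_add_finrank_ker σ
    have h2 := (LinearMap.range σ).finrank_le
    rw [finrank_fintype_fun_eq_card] at h1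
    rw [finrank_self] at h2
    omega
  have hinf : N ⊓ LinearMap.ker σ ≠ ⊥ := by
    rw [← Submodule.one_le_finrank_iff]
    have h1 := Submodule.finrank_sup_add_finrank_inf_eq N (LinearMap.ker σ)
    have h2 := (N ⊔ LinearMap.ker σ).finrank_le
    rw [finrank_fintype_fun_eq_card] at h2
    omega
  obtain ⟨c, ⟨hcN, hcσ⟩, hc0⟩ := (Submodule.ne_bot_iff _).1 hinf
  have hc : ∑ i, c i = 0 := by simpa [σ, one_dotProduct] using hcσ
  have hB : ∀ᶠ t in 𝓝 (0 : ℝ), x + t • c ∈ normalCone (polyhedron S) τ ∩ {x | ∑ i, x i = 1} := by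
    filter_upwards [eventually_minFace_add_smul hS hx0 hcN] with t ⟨hnn, heq⟩
    refine ⟨⟨hnn, heq ▸ hτx⟩, ?_⟩
    simpa [Finset.sum_add_distrib, ← Finset.mul_sum, hc] using hx1
  obtain ⟨t, ht, h₁, h₂⟩ := exists_pos_of_eventually hB
  have hseg : x ∈ openSegment ℝ (x + t • c) (x + (-t) • c) :=
    ⟨1 / 2, 1 / 2, by norm_num, by norm_num, by norm_num, by module⟩
  exact hc0 ((smul_eq_zero.1 (add_eq_left.1 (hext h₁ h₂ hseg))).resolve_left ht.ne')

lemma eq_smul_of_mem_extremePoints (hS : S.Nonempty) (hv : ∀ i, v i ≠ 0)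
    (hall : CoversFacetsThrough (polyhedron S) τ v)
    (hx : x ∈ (normalCone (polyhedron S) τ ∩ {x | ∑ i, x i = 1}).extremePoints ℝ) :
    ∃ i, x = (∑ j, v i j)⁻¹ • v i := by
  have h1 := finrank_normalSpace_eq_one_of_mem_extremePoints hS hx
  obtain ⟨⟨⟨hx0, hτx⟩, hx1⟩, -⟩ := hx
  have hdim : finrank ℝ (vectorSpan ℝ (minFace (polyhedron S) x)) = Fintype.card ι - 1 := by
    have := (vectorSpan ℝ (minFace (polyhedron S) x)).finrank_le
    rw [finrank_normalSpace] at h1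
    rw [finrank_fintype_fun_eq_card] at this
    omega
  obtain ⟨i, hi⟩ := hall x hx0 (by rintro rfl; simp at hx1) hdim hτx
  have hvN : v i ∈ normalSpace (minFace (polyhedron S) x) := hi ▸ self_mem_normalSpace_minFace
  obtain ⟨t, ht⟩ := (finrank_eq_one_iff_of_nonzero' (⟨v i, hvN⟩ : normalSpace _)
    (by simpa using hv i)).1 h1 ⟨x, self_mem_normalSpace_minFace⟩
  have hxt : x = t • v i := by simpa using (congrArg Subtype.val ht).symm
  have : t * ∑ j, v i j = 1 := by rw [← hx1, hxt]; simp [Finset.mul_sum]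
  exact ⟨i, by rw [hxt, eq_inv_of_mul_eq_one_left this]⟩

/- Krein–Milman on the compact slice `∑ i, x i = 1` of the normal cone, whose extreme points
are the normalized `v i`. -/
lemma normalCone_subset_conicHull [Fintype κ] (hS : S.Nonempty) (hv : ∀ i, 0 ≤ v i)
    (hv' : ∀ i, v i ≠ 0) (hall : CoversFacetsThrough (polyhedron S) τ v) :
    normalCone (polyhedron S) τ ⊆ conicHull v := by
  set B := normalCone (polyhedron S) τ ∩ {x | ∑ i, x i = 1}
  have hBc : IsCompact B := isCompact_Icc.of_isClosed_subset
    (isClosed_normalCone.inter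
      (isClosed_eq (continuous_finsetSum _ fun i _ => continuous_apply i) continuous_const))
    fun x hx => ⟨hx.1.1, fun i => hx.2 ▸ Finset.single_le_sum (fun j _ => hx.1.1 j)
      (Finset.mem_univ i)⟩
  have hBconv : Convex ℝ B := convex_normalCone.inter
    (convex_hyperplane ⟨fun x y => Finset.sum_add_distrib, fun c x => by simp [Finset.mul_sum]⟩ 1)
  set R := Set.range fun i => (∑ j, v i j)⁻¹ • v i
  have hBR : B ⊆ convexHull ℝ R := by
    rw [← closure_convexHull_extremePoints hBc hBconv]
    refine closure_minimal (convexHull_mono fun x hx => ?_)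
      ((Set.finite_range _).isCompact_convexHull (𝕜 := ℝ)).isClosed
    obtain ⟨i, rfl⟩ := eq_smul_of_mem_extremePoints hS hv' hall hx
    exact ⟨i, rfl⟩
  have hRv : convexHull ℝ R ⊆ conicHull v := convexHull_min (Set.range_subset_iff.2 fun i =>
    smul_mem_conicHull (mem_conicHull_self i) (inv_nonneg.2 (Finset.sum_nonneg fun j _ => hv i j)))
    convex_conicHull
  intro b hb
  rcases eq_or_ne b 0 with rfl | hb0
  · exact zero_mem_conicHull
  obtain ⟨j, hj⟩ := Function.ne_iff.1 hb0
  have hs : 0 < ∑ j, b j :=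
    Finset.sum_pos' (fun j _ => hb.1 j) ⟨j, Finset.mem_univ j, (hb.1 j).lt_of_ne' hj⟩
  have := smul_mem_conicHull (hRv (hBR ⟨smul_mem_normalCone hb (inv_nonneg.2 hs.le),
    by simp [← Finset.mul_sum, hs.ne']⟩)) hs.le
  rwa [smul_inv_smul₀ hs.ne'] at this

theorem normalCone_eq_conicHull [Fintype κ] (hS : S.Nonempty) (hτ : τ ⊆ polyhedron S)
    (hv : ∀ i, v i ∈ normalCone (polyhedron S) τ) (hv' : ∀ i, v i ≠ 0)
    (hall : CoversFacetsThrough (polyhedron S) τ v) :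
    normalCone (polyhedron S) τ = conicHull v :=
  (normalCone_subset_conicHull hS (fun i => (hv i).1) hv' hall).antisymm
    (conicHull_subset_normalCone hτ hv)

/- A strictly positive combination of the `v i` is `t • a₀` plus a point of the normal cone,
and conversely a point of `Δ_τ` can be pushed back into the normal cone along `-∑ i, v i`. -/
theorem coneOfFace_eq_strictConicHull [Fintype κ] (hS : S.Nonempty) (ha₀ : 0 ≤ a₀)
    (ha₀' : a₀ ≠ 0) (hK : normalCone (polyhedron S) (minFace (polyhedron S) a₀) = conicHull v) :
    coneOfFace (polyhedron S) (minFace (polyhedron S) a₀) = strictConicHull v := by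
  have hvK : ∀ i, v i ∈ normalCone (polyhedron S) (minFace (polyhedron S) a₀) :=
    fun i => hK ▸ mem_conicHull_self i
  ext x
  constructor
  · rintro ⟨hx0, -, hxτ⟩
    have hc : -∑ i, v i ∈ normalSpace (minFace (polyhedron S) x) :=
      neg_mem (sum_mem fun i _ => normalSpace_anti (hxτ ▸ (hvK i).2) self_mem_normalSpace_minFace)
    obtain ⟨t, ht, ⟨hnn, heq⟩, -⟩ :=
      exists_pos_of_eventually (eventually_minFace_add_smul hS hx0 hc)
    obtain ⟨μ, hμ, hxμ⟩ : x + t • -∑ i, v i ∈ conicHull v := hK ▸ ⟨hnn, (hxτ ▸ heq).ge⟩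
    refine ⟨fun i => μ i + t, fun i => add_pos_of_nonneg_of_pos (hμ i) ht, ?_⟩
    calc x = (x + t • -∑ i, v i) + t • ∑ i, v i := by module
      _ = ∑ i, (μ i + t) • v i := by
        rw [hxμ, Finset.smul_sum, ← Finset.sum_add_distrib]
        simp [add_smul]
  · rintro ⟨lam, hlam, rfl⟩
    obtain ⟨μ, hμ, hμa⟩ : a₀ ∈ conicHull v := hK ▸ ⟨ha₀, subset_rfl⟩
    have hsmall : ∀ᶠ t in 𝓝 (0 : ℝ), ∀ i, t * μ i < lam i := eventually_all.2 fun i =>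
      ((continuous_id.mul continuous_const).tendsto' 0 0 (zero_mul _)).eventually_lt_const (hlam i)
    obtain ⟨t, ht, hlt, -⟩ := exists_pos_of_eventually hsmall
    have hy : ∑ i, (lam i - t * μ i) • v i ∈
        normalCone (polyhedron S) (minFace (polyhedron S) a₀) :=
      hK ▸ ⟨_, fun i => (sub_pos.2 (hlt i)).le, rfl⟩
    convert add_smul_mem_coneOfFace hS ha₀ ha₀' hy ht using 1
    simp [hμa, Finset.smul_sum, sub_smul, smul_smul]

theorem span_coneOfFace (hS : S.Nonempty) (ha₀ : 0 ≤ a₀) (ha₀' : a₀ ≠ 0) :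
    Submodule.span ℝ (coneOfFace (polyhedron S) (minFace (polyhedron S) a₀)) =
      normalSpace (minFace (polyhedron S) a₀) := by
  refine le_antisymm (Submodule.span_le.2 fun b ⟨_, _, hb⟩ => hb ▸ self_mem_normalSpace_minFace)
    fun c hc => ?_
  have hne : ∀ᶠ t in 𝓝 (0 : ℝ), a₀ + t • c ≠ 0 := (tendsto_add_smul a₀ c).eventually_ne ha₀'
  obtain ⟨t, ht, ⟨⟨hnn, heq⟩, hne⟩, -⟩ :=
    exists_pos_of_eventually ((eventually_minFace_add_smul hS ha₀ hc).and hne)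
  have hc : c = t⁻¹ • ((a₀ + t • c) - a₀) := by rw [add_sub_cancel_left, inv_smul_smul₀ ht.ne']
  rw [hc]
  exact Submodule.smul_mem _ _ (Submodule.sub_mem _ (Submodule.subset_span ⟨hnn, hne, heq⟩)
    (Submodule.subset_span ⟨ha₀, ha₀', rfl⟩))

end cones

end Newton

namespace IgusaTS

open Newton

noncomputable def exponents {p n : ℕ} [Fact p.Prime] (f : MvPolynomial (Fin n) ℤ_[p]) :
    Finset (Fin n → ℝ) :=
  f.support.image fun ω : Fin n →₀ ℕ => natVec ω

section

variable {p n : ℕ} [Fact p.Prime] {f : MvPolynomial (Fin n) ℤ_[p]}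

lemma NewtonPolyhedron_eq_polyhedron : NewtonPolyhedron p f = polyhedron (exponents f) := by
  simp only [NewtonPolyhedron, polyhedron, exponents, Finset.set_biUnion_finset_image]
  rfl

lemma natVec_nonneg (a : Fin n → ℕ) : 0 ≤ natVec a := fun i => Nat.cast_nonneg (a i)

lemma natVec_ne_zero {a : Fin n → ℕ} (ha : a ≠ 0) : natVec a ≠ 0 := fun h =>
  ha (funext fun j => by simpa [natVec] using congrFun h j)

lemma exponents_nonempty (hf0 : f ≠ 0) : (exponents f).Nonempty :=
  (support_nonempty.2 hf0).image _

lemma FML_eq_minFace (hf0 : f ≠ 0) {b : Fin n → ℝ} (hb : 0 ≤ b) :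
    FML p f b = minFace (polyhedron (exponents f)) b := by
  obtain ⟨s, -, hs⟩ := exists_mem_minFace (exponents_nonempty hf0) hb
  have hm : mReal p f b = b ⬝ᵥ s := by
    rw [mReal, NewtonPolyhedron_eq_polyhedron]
    exact IsLeast.csInf_eq ⟨⟨s, hs.1, rfl⟩, by rintro _ ⟨y, hy, rfl⟩; exact hs.2 y hy⟩
  ext x
  rw [mem_minFace_iff_of_mem hs, FML, hm, NewtonPolyhedron_eq_polyhedron]
  rfl

end

theorem stmt16_general (p n : ℕ) [Fact p.Prime]
    (f : MvPolynomial (Fin n) ℤ_[p]) (hf0 : f ≠ 0)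
    (τ : Set (Fin n → ℝ)) (hτ : IsProperFace p f τ)
    (e : ℕ) (γ : Fin e → Set (Fin n → ℝ))
    (hγ : ∀ i, IsFacet p f (γ i) ∧ τ ⊆ γ i)
    (hγall : ∀ γ' : Set (Fin n → ℝ), IsFacet p f γ' → τ ⊆ γ' → ∃ i, γ' = γ i)
    (a : Fin e → (Fin n → ℕ))
    (ha : ∀ i, a i ≠ 0 ∧ Primitive (a i) ∧ FML p f (natVec (a i)) = γ i)
    (Δτ : Set (Fin n → ℝ))
    (hΔτ : Δτ = {b : Fin n → ℝ | (∀ i, 0 ≤ b i) ∧ b ≠ 0 ∧ FML p f b = τ}) :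
    Δτ = {x | ∃ lam : Fin e → ℝ, (∀ i, 0 < lam i) ∧ x = ∑ i, lam i • natVec (a i)}
    ∧ closure Δτ = {b : Fin n → ℝ | (∀ i, 0 ≤ b i) ∧ τ ⊆ FML p f b}
    ∧ closure Δτ
        = {x | ∃ lam : Fin e → ℝ, (∀ i, 0 ≤ lam i) ∧ x = ∑ i, lam i • natVec (a i)}
    ∧ Module.finrank ℝ (Submodule.span ℝ Δτ)
        = n - Module.finrank ℝ (affineSpan ℝ τ).direction := by
  obtain ⟨a₀, ha₀, ha₀', rfl⟩ := hτ
  have hS := exponents_nonempty hf0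
  set P := polyhedron (exponents f)
  have hF : ∀ b : Fin n → ℝ, 0 ≤ b → FML p f b = minFace P b := fun b hb => FML_eq_minFace hf0 hb
  have hvK : ∀ i, natVec (a i) ∈ normalCone P (minFace P a₀) := fun i =>
    ⟨natVec_nonneg _, by rw [← hF _ (natVec_nonneg _), ← hF a₀ ha₀, (ha i).2.2]; exact (hγ i).2⟩
  have hall : CoversFacetsThrough P (minFace P a₀) fun i => natVec (a i) := by
    intro b hb hb0 hdim hτb
    rw [← hF b hb, ← hF a₀ ha₀] at hτb
    obtain ⟨i, hi⟩ := hγall (FML p f b) ⟨Or.inr ⟨b, hb, hb0, rfl⟩,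
      by rw [direction_affineSpan, hF b hb, hdim, Fintype.card_fin]⟩ hτb
    exact ⟨i, by rw [← hF b hb, hi, ← (ha i).2.2, hF _ (natVec_nonneg _)]⟩
  have hNC := normalCone_eq_conicHull hS (fun x hx => hx.1) hvK
    (fun i => natVec_ne_zero (ha i).1) hall
  have hΔ : Δτ = coneOfFace P (minFace P a₀) := by
    rw [hΔτ]; ext b; exact and_congr_right fun hb => by rw [hF b hb, hF a₀ ha₀]
  have hK : {b : Fin n → ℝ | (∀ i, 0 ≤ b i) ∧ FML p f a₀ ⊆ FML p f b} =
      normalCone P (minFace P a₀) := by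
    ext b; exact and_congr_right fun hb => by rw [hF b hb, hF a₀ ha₀]
  rw [hΔ, hK, closure_coneOfFace hS ha₀ ha₀', span_coneOfFace hS ha₀ ha₀', finrank_normalSpace,
    direction_affineSpan, Fintype.card_fin, hF a₀ ha₀]
  exact ⟨coneOfFace_eq_strictConicHull hS ha₀ ha₀' hNC, rfl, hNC, rfl⟩

/-- **Lemma (Denef–Hoornaert).** The cone `Δ_τ` associated to a proper face `τ` is
the strictly positive span of the primitive normals `a₁,…,a_e` of the facets
containing `τ`; its closure is `{a ≥ 0 : τ ⊆ F_f(a)}`, which equals the nonnegative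
span; and its dimension is `n - dim τ`. -/
theorem stmt16 (p n : ℕ) [Fact p.Prime]
    (f : MvPolynomial (Fin n) ℤ_[p]) (hf0 : f ≠ 0) (hfc : constantCoeff f = 0)
    (τ : Set (Fin n → ℝ)) (hτ : IsProperFace p f τ)
    (e : ℕ) (γ : Fin e → Set (Fin n → ℝ)) (hγinj : Function.Injective γ)
    (hγ : ∀ i, IsFacet p f (γ i) ∧ τ ⊆ γ i)
    (hγall : ∀ γ' : Set (Fin n → ℝ), IsFacet p f γ' → τ ⊆ γ' → ∃ i, γ' = γ i)
    (a : Fin e → (Fin n → ℕ))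
    (ha : ∀ i, a i ≠ 0 ∧ Primitive (a i) ∧ FML p f (natVec (a i)) = γ i)
    (Δτ : Set (Fin n → ℝ))
    (hΔτ : Δτ = {b : Fin n → ℝ | (∀ i, 0 ≤ b i) ∧ b ≠ 0 ∧ FML p f b = τ}) :
    Δτ = {x | ∃ lam : Fin e → ℝ, (∀ i, 0 < lam i) ∧ x = ∑ i, lam i • natVec (a i)}
    ∧ closure Δτ = {b : Fin n → ℝ | (∀ i, 0 ≤ b i) ∧ τ ⊆ FML p f b}
    ∧ closure Δτ
        = {x | ∃ lam : Fin e → ℝ, (∀ i, 0 ≤ lam i) ∧ x = ∑ i, lam i • natVec (a i)}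
    ∧ Module.finrank ℝ (Submodule.span ℝ Δτ)
        = n - Module.finrank ℝ (affineSpan ℝ τ).direction :=
  stmt16_general p n f hf0 τ hτ e γ hγ hγall a ha Δτ hΔτ

end IgusaTS
end
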